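/- arXiv:2106.11438 — 4 statements merged into one kernel-verified Lean document; each statement's English description precedes it below -/
import Mathlib

section
/- Let R be a probability distribution supported on a ball of radius r in ℝⁿ, let x* ~ R, and let y = Ax* + ξ where A ∈ ℝ^{m×n} is any fixed (deterministic) matrix and ξ ~ N(0, (σ²/m)I_m). Assume δ < 0.1. If there exists a recovery scheme that takes (y, A) as input and outputs x̂ with ‖x̂ − x*‖ ≤ O(η) with probability at least 1 − δ, then m ≥ (0.15 / log(1 + m r² ‖A‖_∞² / σ²)) · ( log cov_{3η, 4δ}(R) + log(6δ) − O(1) ). -/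
/-!
Let `g x` be the probability that the scheme recovers `x` up to `η` when `x⋆ = x`. By Markov's
inequality `g ≥ 1/2` outside a set of `R`-mass `2δ`, and a maximal `3η`-separated subset `S` of
the good part of the ball covers it by `3η`-balls, so `cov_{3η,4δ}(R) ≤ |S|`. For `p ∈ S` the law
`N(A p, σ²/m I)` of the observation is compared by Cauchy–Schwarz with the single law
`Q = N(A x₀, (σ²/m + r²‖A‖∞²) I)`: `g p ^ 2 ≤ Q(dec y ∈ B(p, η)) · ∫ (dP/dQ)² dQ`, and this
second moment is at most `(1 + m r² ‖A‖∞² / σ²) ^ m` because all means are `r ‖A‖∞`-close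
coordinatewise. The balls `B(p, η)` are disjoint, so summing over `S` gives
`|S| ≤ 4 (1 + m r² ‖A‖∞² / σ²) ^ m`, which is the claim with `Cerr = 1` and `CO = 2`.
-/

open MeasureTheory ProbabilityTheory ENNReal
open scoped NNReal

noncomputable section

/-- `ℝⁿ` with the `ℓ₂` norm. -/
abbrev EucSp (n : ℕ) : Type := EuclideanSpace ℝ (Fin n)

/-- `m × n` real matrices, as functions (so that the product measurable structure is found). -/
abbrev MatR (m n : ℕ) : Type := Fin m → Fin n → ℝ

/-- The `(η, δ)`-approximate covering number of a measure `R` on `ℝⁿ`: the least number of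
closed `ℓ₂`-balls of radius `η` whose union has `R`-mass at least `1 - δ`. -/
def covNum {n : ℕ} (R : Measure (EucSp n)) (η δ : ℝ) : ℕ :=
  sInf {k : ℕ | ∃ s : Finset (EucSp n), s.card = k ∧
    ENNReal.ofReal (1 - δ) ≤ R (⋃ x ∈ s, Metric.closedBall x η)}

/-- `γ` is a coupling of `μ` and `ν`. -/
def IsCoupling {α : Type*} [MeasurableSpace α] (γ : Measure (α × α)) (μ ν : Measure α) : Prop :=
  γ.map Prod.fst = μ ∧ γ.map Prod.snd = ν

/-- Wasserstein-`p` distance. -/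
def wassDist {α : Type*} [MeasurableSpace α] [NormedAddCommGroup α]
    (p : ℝ) (μ ν : Measure α) : ℝ≥0∞ :=
  ⨅ γ ∈ {γ : Measure (α × α) | IsCoupling γ μ ν},
    (∫⁻ z, ENNReal.ofReal (‖z.1 - z.2‖ ^ p) ∂γ) ^ (1 / p)

/-- Wasserstein-`∞` distance. -/
def wassInf {α : Type*} [MeasurableSpace α] [NormedAddCommGroup α]
    (μ ν : Measure α) : ℝ≥0∞ :=
  ⨅ γ ∈ {γ : Measure (α × α) | IsCoupling γ μ ν},
    essSup (fun z => ENNReal.ofReal ‖z.1 - z.2‖) γ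

/-- Total variation distance between two measures. -/
def tvDist {α : Type*} [MeasurableSpace α] (μ ν : Measure α) : ℝ :=
  ⨆ s : {s : Set α // MeasurableSet s}, ((μ s.1).toReal - (ν s.1).toReal)

open Classical in
/-- Kullback-Leibler divergence (natural log), `∞` if not absolutely continuous/integrable. -/
def klDivE {α : Type*} [MeasurableSpace α] (μ ν : Measure α) : ℝ≥0∞ :=
  if μ ≪ ν ∧ Integrable (fun x => Real.log (μ.rnDeriv ν x).toReal) μ
  then ENNReal.ofReal (∫ x, Real.log (μ.rnDeriv ν x).toReal ∂μ) else ⊤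

/-- Shannon mutual information (in nats) between the two coordinates of a joint law. -/
def mutualInfoE {α β : Type*} [MeasurableSpace α] [MeasurableSpace β]
    (μ : Measure (α × β)) : ℝ≥0∞ :=
  klDivE μ ((μ.map Prod.fst).prod (μ.map Prod.snd))

/-- Mutual information in bits. -/
def mutualInfoBits {α β : Type*} [MeasurableSpace α] [MeasurableSpace β]
    (μ : Measure (α × β)) : ℝ≥0∞ :=
  mutualInfoE μ / ENNReal.ofReal (Real.log 2)

/-- Standard product Gaussian `N(0, v I_m)` on `ℝᵐ` (with the `ℓ₂` structure). -/
def gaussianVec (m : ℕ) (v : ℝ≥0) : Measure (EucSp m) :=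
  (Measure.pi fun _ : Fin m => gaussianReal 0 v).map
    (⇑(EuclideanSpace.equiv (Fin m) ℝ).symm)

/-- Law of an `m × n` random matrix with i.i.d. `N(0, 1/m)` entries. -/
def gaussMatrix (m n : ℕ) : Measure (MatR m n) :=
  Measure.pi fun _ : Fin m => Measure.pi fun _ : Fin n => gaussianReal 0 ((m : ℝ≥0)⁻¹)

/-- Apply a matrix to a vector of `ℝⁿ`, landing in `ℝᵐ` (`ℓ₂` structure on both sides). -/
def applyMat {m n : ℕ} (A : MatR m n) (x : EucSp n) : EucSp m :=
  (EuclideanSpace.equiv (Fin m) ℝ).symm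
    (fun i => ∑ j, A i j * (EuclideanSpace.equiv (Fin n) ℝ) x j)

/-- Maximum `ℓ₂` norm of a row of `A`. -/
def maxRowNorm {m n : ℕ} (A : MatR m n) : ℝ :=
  ⨆ i : Fin m, Real.sqrt (∑ j, (A i j) ^ 2)

/-- Joint law of `(x⋆, y)` where `x⋆ ∼ P` and `y = A x⋆ + ξ`,
`ξ ∼ N(0, (σ²/m) I_m)` independent of `x⋆`. -/
def jointXY {m n : ℕ} (P : Measure (EucSp n)) (A : MatR m n)
    (σ : ℝ) : Measure (EucSp n × EucSp m) :=
  (P.prod (gaussianVec m (Real.toNNReal (σ ^ 2 / m)))).map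
    (fun p => (p.1, applyMat A p.1 + p.2))

/-- Joint law of `(y, x⋆)`. -/
def jointYX {m n : ℕ} (P : Measure (EucSp n)) (A : MatR m n)
    (σ : ℝ) : Measure (EucSp m × EucSp n) :=
  (jointXY P A σ).map Prod.swap

/-- Law of the observation `y` alone. -/
def obsDist {m n : ℕ} (P : Measure (EucSp n)) (A : MatR m n)
    (σ : ℝ) : Measure (EucSp m) :=
  (jointXY P A σ).map Prod.snd

/-- `κ` is (a version of) the posterior/conditional distribution of the second coordinate given
the first, for the joint law `ρ`.  Sampling from `κ y` is posterior sampling. -/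
def IsPosterior {α β : Type*} [MeasurableSpace α] [MeasurableSpace β]
    (ρ : Measure (α × β)) (κ : Kernel α β) : Prop :=
  IsMarkovKernel κ ∧ ∀ s t : Set _, MeasurableSet s → MeasurableSet t →
    ρ (s ×ˢ t) = ∫⁻ y in s, κ y t ∂(ρ.map Prod.fst)

namespace CompressedSensing

open Metric

section PiMeasure

variable {ι : Type*} [Fintype ι] {α : ι → Type*} [∀ i, MeasurableSpace (α i)]

theorem lintegral_pi_prod_apply (μ : ∀ i, Measure (α i)) [∀ i, IsProbabilityMeasure (μ i)]
    (f : ∀ i, α i → ℝ≥0∞) (hf : ∀ i, Measurable (f i)) :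
    ∫⁻ x, ∏ i, f i (x i) ∂Measure.pi μ = ∏ i, ∫⁻ t, f i t ∂μ i := by
  refine (lintegral_prod_eq_prod_lintegral_of_indepFun Finset.univ
    (fun i (x : ∀ j, α j) => f i (x i)) (iIndepFun_pi fun i => (hf i).aemeasurable)
    fun i => (hf i).comp (measurable_pi_apply i)).trans ?_
  exact Finset.prod_congr rfl fun i _ => (measurePreserving_eval μ i).lintegral_comp (hf i)

theorem pi_withDensity (μ : ∀ i, Measure (α i)) [∀ i, IsProbabilityMeasure (μ i)]
    (f : ∀ i, α i → ℝ≥0∞) (hf : ∀ i, Measurable (f i))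
    [∀ i, SigmaFinite ((μ i).withDensity (f i))] :
    Measure.pi (fun i => (μ i).withDensity (f i)) =
      (Measure.pi μ).withDensity (fun x => ∏ i, f i (x i)) := by
  refine Measure.pi_eq fun E hE => ?_
  rw [withDensity_apply _ (MeasurableSet.univ_pi hE), ← lintegral_indicator (.univ_pi hE)]
  have hind : (Set.univ.pi E).indicator (fun x => ∏ i, f i (x i)) =
      fun x => ∏ i, (E i).indicator (f i) (x i) := by
    funext x
    by_cases hx : x ∈ Set.univ.pi E
    · rw [Set.indicator_of_mem hx]
      exact Finset.prod_congr rfl fun i _ => (Set.indicator_of_mem (hx i trivial) _).symm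
    · obtain ⟨i, hi⟩ : ∃ i, x i ∉ E i := by simpa using hx
      rw [Set.indicator_of_notMem hx,
        Finset.prod_eq_zero (Finset.mem_univ i) (Set.indicator_of_notMem hi _)]
  rw [hind, lintegral_pi_prod_apply μ _ fun i => (hf i).indicator (hE i)]
  exact Finset.prod_congr rfl fun i _ => by
    rw [lintegral_indicator (hE i), withDensity_apply _ (hE i)]

end PiMeasure

theorem sq_lintegral_withDensity_le {β : Type*} [MeasurableSpace β] (Q : Measure β)
    {ρ F : β → ℝ≥0∞} (hρ : Measurable ρ) (hF : Measurable F) (hF_le : ∀ x, F x ≤ 1) :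
    (∫⁻ x, F x ∂Q.withDensity ρ) ^ 2 ≤ (∫⁻ x, F x ∂Q) * ∫⁻ x, ρ x ^ 2 ∂Q := by
  have half_add_half : ∀ a : ℝ≥0∞, a ^ (2⁻¹ : ℝ) * a ^ (2⁻¹ : ℝ) = a := fun a => by
    rw [← ENNReal.rpow_add_of_nonneg _ _ (by norm_num) (by norm_num)]; norm_num
  have sq_half : ∀ a : ℝ≥0∞, (a ^ (2⁻¹ : ℝ)) ^ (2 : ℝ) = a := fun a => by
    rw [← ENNReal.rpow_mul]; norm_num
  have holder := ENNReal.lintegral_mul_le_Lp_mul_Lq Q Real.HolderConjugate.two_two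
    (f := fun x => F x ^ (2⁻¹ : ℝ)) (g := fun x => F x ^ (2⁻¹ : ℝ) * ρ x)
    (hF.pow_const _).aemeasurable ((hF.pow_const _).mul hρ).aemeasurable
  simp only [Pi.mul_apply, ← mul_assoc, half_add_half, sq_half,
    ENNReal.mul_rpow_of_nonneg _ _ zero_le_two, ENNReal.rpow_two] at holder
  rw [lintegral_withDensity_eq_lintegral_mul _ hρ hF]
  calc (∫⁻ x, (ρ * F) x ∂Q) ^ 2
      ≤ ((∫⁻ x, F x ∂Q) ^ (2⁻¹ : ℝ) * (∫⁻ x, F x * ρ x ^ 2 ∂Q) ^ (2⁻¹ : ℝ)) ^ 2 := by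
        simp only [Pi.mul_apply, mul_comm (ρ _)]
        gcongr
        simpa [one_div] using holder
    _ = (∫⁻ x, F x ∂Q) * ∫⁻ x, F x * ρ x ^ 2 ∂Q := by
        rw [mul_pow, sq, sq, half_add_half, half_add_half]
    _ ≤ (∫⁻ x, F x ∂Q) * ∫⁻ x, ρ x ^ 2 ∂Q := by
        gcongr with x
        exact mul_le_of_le_one_left' (hF_le x)

section Gaussian

open Real

variable (a b : ℝ) {v s : ℝ≥0}

theorem measurable_ofReal_gaussianPDFReal_div (v s : ℝ≥0) :
    Measurable fun t => ENNReal.ofReal (gaussianPDFReal a v t / gaussianPDFReal b s t) :=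
  ((measurable_gaussianPDFReal _ _).div (measurable_gaussianPDFReal _ _)).ennreal_ofReal

theorem gaussianReal_eq_withDensity_pdf_div (hv : v ≠ 0) (hs : s ≠ 0) :
    gaussianReal a v = (gaussianReal b s).withDensity
      (fun t => ENNReal.ofReal (gaussianPDFReal a v t / gaussianPDFReal b s t)) := by
  rw [gaussianReal_of_var_ne_zero _ hv, gaussianReal_of_var_ne_zero _ hs,
    ← withDensity_mul _ (measurable_gaussianPDF _ _)
      (measurable_ofReal_gaussianPDFReal_div a b v s)]
  congr 1
  funext t
  have hq : 0 < gaussianPDFReal b s t := gaussianPDFReal_pos _ _ _ hs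
  rw [Pi.mul_apply, gaussianPDF, gaussianPDF, ← ENNReal.ofReal_mul hq.le]
  congr 1
  field_simp

-- Completing the square in the exponent.
theorem gaussianPDFReal_sq_div (hv : 0 < (v : ℝ)) (hvs : (v : ℝ) ≤ s) (t : ℝ) :
    gaussianPDFReal a v t ^ 2 / gaussianPDFReal b s t =
      s / √(v * (2 * s - v)) * exp ((a - b) ^ 2 / (2 * s - v)) *
        gaussianPDFReal (b + 2 * (a - b) * s / (2 * s - v))
          ((v : ℝ) * s / (2 * s - v)).toNNReal t := by
  have hs : (0 : ℝ) < s := hv.trans_le hvs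
  have hw : (0 : ℝ) < 2 * s - v := by linarith
  have hq : 0 < gaussianPDFReal b s t := gaussianPDFReal_pos _ _ _ (by exact_mod_cast hs.ne')
  rw [div_eq_iff hq.ne']
  simp only [gaussianPDFReal, Real.coe_toNNReal _ (by positivity : 0 ≤ (v : ℝ) * s / (2 * s - v))]
  have hexp : -(t - a) ^ 2 / (2 * v) + -(t - a) ^ 2 / (2 * v) =
      (a - b) ^ 2 / (2 * s - v) + (-(t - (b + 2 * (a - b) * s / (2 * s - v))) ^ 2 /
        (2 * (v * s / (2 * s - v))) + -(t - b) ^ 2 / (2 * s)) := by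
    field_simp
    ring
  have hroots : √(v * (2 * s - v)) * (√(2 * π * (v * s / (2 * s - v))) * √(2 * π * s)) =
      2 * π * v * s := by
    rw [← sqrt_mul (by positivity), ← sqrt_mul (by positivity),
      show (v : ℝ) * (2 * s - v) * (2 * π * (v * s / (2 * s - v)) * (2 * π * s)) =
        (2 * π * v * s) ^ 2 by field_simp]
    exact sqrt_sq (by positivity)
  have hconst : (√(2 * π * v))⁻¹ ^ 2 = s / √(v * (2 * s - v)) *
      ((√(2 * π * (v * s / (2 * s - v))))⁻¹ * (√(2 * π * s))⁻¹) := by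
    rw [inv_pow, sq_sqrt (by positivity), div_eq_mul_inv, ← mul_inv, mul_assoc (s : ℝ),
      ← mul_inv, hroots]
    field_simp
  rw [mul_pow, sq (exp _), ← exp_add, hexp, exp_add, exp_add, hconst]
  ring

theorem div_sqrt_mul_exp_le_div (hv : 0 < (v : ℝ)) (hvs : (v : ℝ) ≤ s) (hab : (a - b) ^ 2 ≤ s - v) :
    s / √(v * (2 * s - v)) * exp ((a - b) ^ 2 / (2 * s - v)) ≤ s / v := by
  have hw : (0 : ℝ) < 2 * s - v := by linarith
  set u : ℝ := (2 * s - v) / v with hu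
  have hu_pos : 0 < u := by positivity
  have hexp : exp ((a - b) ^ 2 / (2 * s - v)) ^ 2 ≤ u := calc
    exp ((a - b) ^ 2 / (2 * s - v)) ^ 2 ≤ exp ((s - v) / (2 * s - v)) ^ 2 := by gcongr
    _ = exp (1 - u⁻¹) := by
      rw [← exp_nat_mul, hu, inv_div]
      congr 1
      push_cast
      field_simp
      ring
    _ ≤ exp (log u) := exp_le_exp.2 (one_sub_inv_le_log_of_pos hu_pos)
    _ = u := exp_log hu_pos
  have hsqrt : √(v * (2 * s - v)) = v * √u := by
    rw [hu, ← sqrt_sq hv.le, ← sqrt_mul (sq_nonneg _), sqrt_sq hv.le]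
    congr 1
    field_simp
  calc s / √(v * (2 * s - v)) * exp ((a - b) ^ 2 / (2 * s - v))
      ≤ s / (v * √u) * √u := by
        rw [hsqrt]
        gcongr
        exact le_sqrt_of_sq_le hexp
    _ = s / v := by field_simp

theorem lintegral_sq_gaussianPDFReal_div_le (hv : 0 < (v : ℝ)) (hvs : (v : ℝ) ≤ s)
    (hab : (a - b) ^ 2 ≤ s - v) :
    ∫⁻ t, ENNReal.ofReal (gaussianPDFReal a v t / gaussianPDFReal b s t) ^ 2
      ∂gaussianReal b s ≤ ENNReal.ofReal (s / v) := by
  have hs : (0 : ℝ) < s := hv.trans_le hvs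
  have hs0 : s ≠ 0 := by exact_mod_cast hs.ne'
  have hV0 : (v * s / (2 * s - v) : ℝ).toNNReal ≠ 0 := by
    rw [Ne, Real.toNNReal_eq_zero, not_le]
    have : (0 : ℝ) < 2 * s - v := by linarith
    positivity
  have hdensity : ∀ t, gaussianPDF b s t *
      ENNReal.ofReal (gaussianPDFReal a v t / gaussianPDFReal b s t) ^ 2 =
      ENNReal.ofReal (s / √(v * (2 * s - v)) * exp ((a - b) ^ 2 / (2 * s - v))) *
        gaussianPDF (b + 2 * (a - b) * s / (2 * s - v)) ((v : ℝ) * s / (2 * s - v)).toNNReal t := by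
    intro t
    have hq : 0 < gaussianPDFReal b s t := gaussianPDFReal_pos _ _ _ hs0
    rw [gaussianPDF, gaussianPDF,
      ← ENNReal.ofReal_pow (div_nonneg (gaussianPDFReal_nonneg _ _ _) hq.le),
      ← ENNReal.ofReal_mul hq.le, ← ENNReal.ofReal_mul (by positivity),
      ← gaussianPDFReal_sq_div a b hv hvs]
    congr 1
    field_simp
  rw [gaussianReal_of_var_ne_zero _ hs0, lintegral_withDensity_eq_lintegral_mul _
    (measurable_gaussianPDF b s) ((measurable_ofReal_gaussianPDFReal_div a b v s).pow_const 2)]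
  simp only [Pi.mul_apply, hdensity]
  rw [lintegral_const_mul _ (measurable_gaussianPDF _ _), lintegral_gaussianPDF_eq_one _ hV0,
    mul_one]
  exact ENNReal.ofReal_le_ofReal (div_sqrt_mul_exp_le_div a b hv hvs hab)

end Gaussian

theorem sq_lintegral_pi_gaussianReal_le {ι : Type*} [Fintype ι] (c d : ι → ℝ) {v s : ℝ≥0}
    (hv : 0 < (v : ℝ)) (hvs : (v : ℝ) ≤ s) (hcd : ∀ i, (c i - d i) ^ 2 ≤ s - v)
    {F : (ι → ℝ) → ℝ≥0∞} (hF : Measurable F) (hF_le : ∀ x, F x ≤ 1) :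
    (∫⁻ x, F x ∂Measure.pi fun i => gaussianReal (c i) v) ^ 2 ≤
      (∫⁻ x, F x ∂Measure.pi fun i => gaussianReal (d i) s) *
        ENNReal.ofReal (s / v) ^ Fintype.card ι := by
  have hv0 : v ≠ 0 := by exact_mod_cast hv.ne'
  have hs0 : s ≠ 0 := by exact_mod_cast (hv.trans_le hvs).ne'
  set ρ : ι → ℝ → ℝ≥0∞ := fun i t =>
    ENNReal.ofReal (gaussianPDFReal (c i) v t / gaussianPDFReal (d i) s t)
  have hρ : ∀ i, Measurable (ρ i) := fun i => measurable_ofReal_gaussianPDFReal_div _ _ v s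
  have hgauss : ∀ i, gaussianReal (c i) v = (gaussianReal (d i) s).withDensity (ρ i) :=
    fun i => gaussianReal_eq_withDensity_pdf_div (c i) (d i) hv0 hs0
  have : ∀ i, SigmaFinite ((gaussianReal (d i) s).withDensity (ρ i)) := fun i => by
    rw [← hgauss]; infer_instance
  have hprod : Measurable fun x : ι → ℝ => ∏ i, ρ i (x i) :=
    Finset.measurable_prod _ fun i _ => (hρ i).comp (measurable_pi_apply i)
  have hchiSq : ∫⁻ x, (∏ i, ρ i (x i)) ^ 2 ∂Measure.pi (fun i => gaussianReal (d i) s) ≤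
      ENNReal.ofReal (s / v) ^ Fintype.card ι := by
    simp_rw [← Finset.prod_pow]
    rw [lintegral_pi_prod_apply _ (fun i t => ρ i t ^ 2) fun i => (hρ i).pow_const 2,
      ← Finset.card_univ, ← Finset.prod_const]
    exact Finset.prod_le_prod' fun i _ =>
      lintegral_sq_gaussianPDFReal_div_le (c i) (d i) hv hvs (hcd i)
  simp_rw [hgauss]
  rw [pi_withDensity _ ρ hρ]
  calc _ ≤ _ := sq_lintegral_withDensity_le _ hprod hF hF_le
    _ ≤ _ := by gcongr

theorem exists_finset_isSeparated_isCover {X : Type*} [PseudoMetricSpace X] {G : Set X}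
    (hG : TotallyBounded G) {ε : ℝ≥0} (hε : ε ≠ 0) :
    ∃ S : Finset X, ↑S ⊆ G ∧ IsSeparated ε (S : Set X) ∧ G ⊆ ⋃ p ∈ S, closedBall p ε := by
  have hpacking : packingNumber ε G ≠ ⊤ := by
    obtain ⟨N, -, hN, hcover⟩ := exists_finite_isCover_of_totallyBounded (ε := ε / 2)
      (by simpa using hε) hG
    have := (packingNumber_two_mul_le_externalCoveringNumber (ε / 2) G).trans
      hcover.externalCoveringNumber_le_encard
    rw [mul_div_cancel₀ _ two_ne_zero] at this
    exact ne_top_of_le_ne_top hN.encard_lt_top.ne this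
  have hfinite : (maximalSeparatedSet ε G).Finite :=
    Set.encard_ne_top_iff.1 (by rwa [encard_maximalSeparatedSet hpacking])
  refine ⟨hfinite.toFinset, by simpa using maximalSeparatedSet_subset,
    by simpa using isSeparated_maximalSeparatedSet, ?_⟩
  simpa using isCover_iff_subset_iUnion_closedBall.1 (isCover_maximalSeparatedSet hpacking)

theorem sum_lintegral_kernel_closedBall_le_one {β X : Type*} [MeasurableSpace β]
    [PseudoMetricSpace X] [MeasurableSpace X] [OpensMeasurableSpace X]
    (κ : Kernel β X) [IsMarkovKernel κ] (Q : Measure β) [IsProbabilityMeasure Q]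
    {S : Finset X} {η : ℝ} (hS : (S : Set X).PairwiseDisjoint (closedBall · η)) :
    ∑ p ∈ S, ∫⁻ w, κ w (closedBall p η) ∂Q ≤ 1 := by
  rw [← lintegral_finsetSum _ fun p _ => κ.measurable_coe measurableSet_closedBall]
  calc ∫⁻ w, ∑ p ∈ S, κ w (closedBall p η) ∂Q ≤ ∫⁻ _, 1 ∂Q := by
        refine lintegral_mono fun w => ?_
        rw [← measure_biUnion_finset hS fun p _ => measurableSet_closedBall]
        exact prob_le_one
    _ = 1 := by simp

theorem measurable_kernel_closedBall {α γ X : Type*} [MeasurableSpace α] [MeasurableSpace γ]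
    [PseudoMetricSpace X] [MeasurableSpace X] [OpensMeasurableSpace X] [SecondCountableTopology X]
    (κ : Kernel α X) [IsSFiniteKernel κ] {T : γ → α} (hT : Measurable T) {U : γ → X}
    (hU : Measurable U) (η : ℝ) :
    Measurable fun ω => κ (T ω) (closedBall (U ω) η) := by
  have hset : MeasurableSet {q : γ × X | dist q.2 (U q.1) ≤ η} :=
    measurableSet_le (measurable_snd.dist (hU.comp measurable_fst)) measurable_const
  exact Kernel.measurable_kernel_prodMk_left (κ := κ.comap T hT) hset

theorem _root_.Metric.IsSeparated.pairwiseDisjoint_closedBall {X : Type*} [PseudoMetricSpace X]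
    {S : Set X} {ε : ℝ≥0} (hS : IsSeparated ε S) {η : ℝ} (hη : 2 * η ≤ ε) :
    S.PairwiseDisjoint (closedBall · η) := fun p hp q hq hpq => by
  have hsep : (ε : ℝ≥0∞) < edist p q := hS hp hq hpq
  rw [edist_dist, ← ENNReal.ofReal_coe_nnreal, ENNReal.ofReal_lt_ofReal_iff'] at hsep
  exact closedBall_disjoint_closedBall (by linarith [hsep.1])

theorem applyMat_apply {m n : ℕ} (A : MatR m n) (x : EucSp n) (i : Fin m) :
    applyMat A x i = ∑ j, A i j * x j := rfl

theorem measurable_applyMat {m n : ℕ} (A : MatR m n) : Measurable (applyMat A) :=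
  (EuclideanSpace.equiv (Fin m) ℝ).symm.continuous.measurable.comp <|
    measurable_pi_lambda _ fun _ => Finset.measurable_sum _ fun j _ =>
      ((measurable_pi_apply j).comp
        (EuclideanSpace.equiv (Fin n) ℝ).continuous.measurable).const_mul _

theorem sq_applyMat_sub_apply_le {m n : ℕ} (A : MatR m n) (p q : EucSp n) (i : Fin m) :
    (applyMat A p i - applyMat A q i) ^ 2 ≤ maxRowNorm A ^ 2 * ‖p - q‖ ^ 2 := by
  have hrow : ∑ j, A i j ^ 2 ≤ maxRowNorm A ^ 2 := by
    have := le_ciSup (f := fun i => Real.sqrt (∑ j, A i j ^ 2)) (Set.finite_range _).bddAbove i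
    calc ∑ j, A i j ^ 2 = Real.sqrt (∑ j, A i j ^ 2) ^ 2 :=
          (Real.sq_sqrt (Finset.sum_nonneg fun _ _ => sq_nonneg _)).symm
      _ ≤ maxRowNorm A ^ 2 := pow_le_pow_left₀ (Real.sqrt_nonneg _) this 2
  have hnorm : ‖p - q‖ ^ 2 = ∑ j, (p j - q j) ^ 2 := by
    simp [EuclideanSpace.norm_sq_eq]
  rw [applyMat_apply, applyMat_apply, ← Finset.sum_sub_distrib, hnorm]
  simp_rw [← mul_sub]
  exact (Finset.sum_mul_sq_le_sq_mul_sq _ _ _).trans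
    (mul_le_mul_of_nonneg_right hrow (Finset.sum_nonneg fun _ _ => sq_nonneg _))

instance isProbabilityMeasure_gaussianVec (m : ℕ) (v : ℝ≥0) :
    IsProbabilityMeasure (gaussianVec m v) :=
  Measure.isProbabilityMeasure_map (EuclideanSpace.equiv (Fin m) ℝ).symm.continuous.aemeasurable

theorem lintegral_gaussianVec_add {m : ℕ} (v : ℝ≥0) (y : EucSp m) {f : EucSp m → ℝ≥0∞}
    (hf : Measurable f) :
    ∫⁻ ξ, f (y + ξ) ∂gaussianVec m v =
      ∫⁻ w, f ((EuclideanSpace.equiv (Fin m) ℝ).symm w)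
        ∂Measure.pi fun i => gaussianReal (y i) v := by
  have hsymm := (EuclideanSpace.equiv (Fin m) ℝ).symm.continuous.measurable
  have hshift : MeasurePreserving (fun (w : Fin m → ℝ) i => y i + w i)
      (Measure.pi fun _ => gaussianReal 0 v) (Measure.pi fun i => gaussianReal (y i) v) :=
    measurePreserving_pi _ _ fun i =>
      ⟨measurable_const_add _, by rw [gaussianReal_map_const_add, zero_add]⟩
  rw [gaussianVec, lintegral_map (f := fun ξ => f (y + ξ)) (hf.comp (measurable_const_add y)) hsymm]
  exact hshift.lintegral_comp (hf.comp hsymm)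

theorem sq_lintegral_gaussianVec_add_le {m : ℕ} {v s : ℝ≥0} (hv : 0 < (v : ℝ))
    (hvs : (v : ℝ) ≤ s) {y z : EucSp m} (hyz : ∀ i, (y i - z i) ^ 2 ≤ s - v)
    {f : EucSp m → ℝ≥0∞} (hf : Measurable f) (hf_le : ∀ x, f x ≤ 1) :
    (∫⁻ ξ, f (y + ξ) ∂gaussianVec m v) ^ 2 ≤
      (∫⁻ ξ, f (z + ξ) ∂gaussianVec m s) * ENNReal.ofReal (s / v) ^ m := by
  rw [lintegral_gaussianVec_add v y hf, lintegral_gaussianVec_add s z hf]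
  simpa using sq_lintegral_pi_gaussianReal_le (fun i => y i) (fun i => z i) hv hvs hyz
    (hf.comp (EuclideanSpace.equiv (Fin m) ℝ).symm.continuous.measurable) fun _ => hf_le _

theorem lintegral_jointXY {m n : ℕ} (P : Measure (EucSp n)) [SFinite P] (A : MatR m n) (σ : ℝ)
    {f : EucSp n × EucSp m → ℝ≥0∞} (hf : Measurable f) :
    ∫⁻ q, f q ∂jointXY P A σ =
      ∫⁻ x, ∫⁻ ξ, f (x, applyMat A x + ξ) ∂gaussianVec m (σ ^ 2 / m).toNNReal ∂P := by
  have hobs : Measurable fun q : EucSp n × EucSp m => (q.1, applyMat A q.1 + q.2) :=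
    measurable_fst.prodMk (((measurable_applyMat A).comp measurable_fst).add measurable_snd)
  rw [jointXY, lintegral_map hf hobs,
    lintegral_prod (fun q => f (q.1, applyMat A q.1 + q.2)) (hf.comp hobs).aemeasurable]

theorem ofReal_one_sub_two_mul_le_measure {β : Type*} [MeasurableSpace β] (μ : Measure β)
    [IsProbabilityMeasure μ] {g : β → ℝ≥0∞} (hg : Measurable g) (hg_le : ∀ x, g x ≤ 1)
    {δ : ℝ} (hδ : 0 ≤ δ) (h : ENNReal.ofReal (1 - δ) ≤ ∫⁻ x, g x ∂μ) :
    ENNReal.ofReal (1 - 2 * δ) ≤ μ {x | 2⁻¹ ≤ g x} := by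
  have hdefect : ∫⁻ x, (1 - g x) ∂μ ≤ ENNReal.ofReal δ := by
    rw [lintegral_sub hg ((lintegral_mono hg_le).trans_lt (by simp)).ne
      (.of_forall hg_le), lintegral_one, measure_univ]
    refine (tsub_le_tsub_left h 1).trans (tsub_le_iff_right.2 ?_)
    calc 1 = ENNReal.ofReal (δ + (1 - δ)) := by simp
      _ ≤ _ := ENNReal.ofReal_add_le
  have hsub : {x | g x < 2⁻¹} ⊆ {x | 2⁻¹ ≤ 1 - g x} := fun x hx => by
    change 2⁻¹ ≤ 1 - g x
    rw [ENNReal.le_sub_iff_add_le_left ((hg_le x).trans_lt ENNReal.one_lt_top).ne (hg_le x)]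
    calc g x + 2⁻¹ ≤ 2⁻¹ + 2⁻¹ := by gcongr; exact le_of_lt hx
      _ = 1 := ENNReal.inv_two_add_inv_two
  have hmarkov : μ {x | g x < 2⁻¹} ≤ ENNReal.ofReal (2 * δ) := calc
    μ {x | g x < 2⁻¹} ≤ μ {x | 2⁻¹ ≤ 1 - g x} := measure_mono hsub
    _ ≤ (∫⁻ x, (1 - g x) ∂μ) / 2⁻¹ :=
        meas_ge_le_lintegral_div (measurable_const.sub hg).aemeasurable (by simp) (by simp)
    _ ≤ ENNReal.ofReal δ / 2⁻¹ := by gcongr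
    _ = ENNReal.ofReal (2 * δ) := by
        rw [div_eq_mul_inv, inv_inv, mul_comm, ENNReal.ofReal_mul zero_le_two,
          ENNReal.ofReal_ofNat]
  calc ENNReal.ofReal (1 - 2 * δ) = 1 - ENNReal.ofReal (2 * δ) := by
        rw [ENNReal.ofReal_sub _ (by positivity), ENNReal.ofReal_one]
    _ ≤ 1 - μ {x | g x < 2⁻¹} := by gcongr
    _ = μ {x | 2⁻¹ ≤ g x} := by
        rw [← prob_compl_eq_one_sub (measurableSet_lt hg measurable_const)]
        congr 1; ext; simp

def recoveryProb {m n : ℕ} (dec : Kernel (EucSp m) (EucSp n)) (A : MatR m n) (v : ℝ≥0) (η : ℝ)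
    (x : EucSp n) : ℝ≥0∞ :=
  ∫⁻ ξ, dec (applyMat A x + ξ) (closedBall x η) ∂gaussianVec m v

section Recovery

variable {m n : ℕ} (dec : Kernel (EucSp m) (EucSp n)) [IsMarkovKernel dec] (A : MatR m n)

theorem measurable_recoveryProb (v : ℝ≥0) (η : ℝ) : Measurable (recoveryProb dec A v η) :=
  Measurable.lintegral_prod_right' (measurable_kernel_closedBall dec
    (((measurable_applyMat A).comp measurable_fst).add measurable_snd) measurable_fst η)

theorem recoveryProb_le_one (v : ℝ≥0) (η : ℝ) (x : EucSp n) : recoveryProb dec A v η x ≤ 1 :=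
  (lintegral_mono fun _ => prob_le_one).trans_eq (by simp)

theorem lintegral_recoveryProb (P : Measure (EucSp n)) [SFinite P] (σ η : ℝ) :
    ∫⁻ x, recoveryProb dec A (σ ^ 2 / m).toNNReal η x ∂P =
      ∫⁻ q, dec q.2 (closedBall q.1 η) ∂jointXY P A σ :=
  (lintegral_jointXY P A σ (measurable_kernel_closedBall dec measurable_snd measurable_fst η)).symm

theorem sq_recoveryProb_le {v s : ℝ≥0} (hv : 0 < (v : ℝ)) (hvs : (v : ℝ) ≤ s) {r : ℝ}
    (hr : r ^ 2 * maxRowNorm A ^ 2 ≤ s - v) {x₀ p : EucSp n} (hp : p ∈ closedBall x₀ r) (η : ℝ) :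
    recoveryProb dec A v η p ^ 2 ≤
      (∫⁻ ξ, dec (applyMat A x₀ + ξ) (closedBall p η) ∂gaussianVec m s) *
        ENNReal.ofReal (s / v) ^ m := by
  have hpx : ‖p - x₀‖ ≤ r := by simpa [dist_eq_norm] using hp
  have hmean : ∀ i, (applyMat A p i - applyMat A x₀ i) ^ 2 ≤ s - v := fun i => calc
    _ ≤ maxRowNorm A ^ 2 * ‖p - x₀‖ ^ 2 := sq_applyMat_sub_apply_le A p x₀ i
    _ ≤ maxRowNorm A ^ 2 * r ^ 2 := by gcongr
    _ ≤ s - v := by linarith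
  exact sq_lintegral_gaussianVec_add_le hv hvs hmean (f := fun w => dec w (closedBall p η))
    (dec.measurable_coe measurableSet_closedBall) fun _ => prob_le_one

theorem card_le_of_inv_two_le_recoveryProb {v s : ℝ≥0} (hv : 0 < (v : ℝ)) (hvs : (v : ℝ) ≤ s)
    {r : ℝ} (hr : r ^ 2 * maxRowNorm A ^ 2 ≤ s - v) {x₀ : EucSp n} {η : ℝ} {S : Finset (EucSp n)}
    (hS_ball : (S : Set (EucSp n)) ⊆ closedBall x₀ r)
    (hS_disjoint : (S : Set (EucSp n)).PairwiseDisjoint (closedBall · η))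
    (hS_prob : ∀ p ∈ S, 2⁻¹ ≤ recoveryProb dec A v η p) :
    (S.card : ℝ≥0∞) ≤ 4 * ENNReal.ofReal (s / v) ^ m := by
  set X := ENNReal.ofReal (s / v) ^ m
  have hpoint : ∀ p ∈ S, 4⁻¹ ≤
      (∫⁻ ξ, dec (applyMat A x₀ + ξ) (closedBall p η) ∂gaussianVec m s) * X := fun p hp => calc
    (4 : ℝ≥0∞)⁻¹ = 2⁻¹ ^ 2 := by rw [← ENNReal.inv_pow]; norm_num
    _ ≤ recoveryProb dec A v η p ^ 2 := by gcongr; exact hS_prob p hp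
    _ ≤ _ := sq_recoveryProb_le dec A hv hvs hr (hS_ball hp) η
  have hsum : ∑ p ∈ S, ∫⁻ ξ, dec (applyMat A x₀ + ξ) (closedBall p η) ∂gaussianVec m s ≤ 1 :=
    sum_lintegral_kernel_closedBall_le_one
      (dec.comap (applyMat A x₀ + ·) (measurable_const_add _)) (gaussianVec m s) hS_disjoint
  have hcard : (S.card : ℝ≥0∞) * 4⁻¹ ≤ X := calc
    (S.card : ℝ≥0∞) * 4⁻¹ = ∑ p ∈ S, 4⁻¹ := by rw [Finset.sum_const, nsmul_eq_mul]
    _ ≤ ∑ p ∈ S, (∫⁻ ξ, dec (applyMat A x₀ + ξ) (closedBall p η) ∂gaussianVec m s) * X :=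
        Finset.sum_le_sum hpoint
    _ ≤ X := by rw [← Finset.sum_mul]; exact mul_le_of_le_one_left' hsum
  rwa [← ENNReal.le_div_iff_mul_le (by simp) (by simp), div_eq_mul_inv, inv_inv, mul_comm] at hcard

end Recovery

theorem covNum_le_of_recovery {n m : ℕ} (hm : 0 < m) {r σ η δ : ℝ} {x₀ : EucSp n}
    {R : Measure (EucSp n)} [IsProbabilityMeasure R] (hR : R (closedBall x₀ r)ᶜ = 0)
    (hσ : 0 < σ) (hη : 0 < η) (hδ : 0 ≤ δ) (A : MatR m n) (dec : Kernel (EucSp m) (EucSp n))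
    [IsMarkovKernel dec]
    (hsucc : ENNReal.ofReal (1 - δ) ≤ ∫⁻ q, dec q.2 (closedBall q.1 η) ∂jointXY R A σ) :
    (covNum R (3 * η) (4 * δ) : ℝ) ≤ 4 * (1 + m * r ^ 2 * maxRowNorm A ^ 2 / σ ^ 2) ^ m := by
  set B := maxRowNorm A
  set v : ℝ≥0 := (σ ^ 2 / m).toNNReal
  set s : ℝ≥0 := v + (r ^ 2 * B ^ 2).toNNReal
  have hv : (v : ℝ) = σ ^ 2 / m := Real.coe_toNNReal _ (by positivity)
  have hsv : (s : ℝ) - v = r ^ 2 * B ^ 2 := by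
    simp [s, Real.coe_toNNReal _ (by positivity : 0 ≤ r ^ 2 * B ^ 2)]
  have hv_pos : 0 < (v : ℝ) := by rw [hv]; positivity
  have hvs : (v : ℝ) ≤ s := by nlinarith [sq_nonneg (r * B)]
  set g := recoveryProb dec A v η
  have hg := measurable_recoveryProb dec A v η
  rw [← lintegral_recoveryProb] at hsucc
  set G := {x | 2⁻¹ ≤ g x} ∩ closedBall x₀ r
  have hG : ENNReal.ofReal (1 - 4 * δ) ≤ R G := calc
    _ ≤ ENNReal.ofReal (1 - 2 * δ) := by gcongr; linarith
    _ ≤ R {x | 2⁻¹ ≤ g x} :=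
        ofReal_one_sub_two_mul_le_measure R hg (recoveryProb_le_one dec A v η) hδ hsucc
    _ = R G := (measure_inter_conull hR).symm
  obtain ⟨S, hSG, hS_sep, hS_cover⟩ := exists_finset_isSeparated_isCover
    ((isCompact_closedBall x₀ r).totallyBounded.subset Set.inter_subset_right)
    (ε := (3 * η).toNNReal) (by simpa using hη)
  have h3η : ((3 * η).toNNReal : ℝ) = 3 * η := Real.coe_toNNReal _ (by positivity)
  have hcov : covNum R (3 * η) (4 * δ) ≤ S.card :=
    Nat.sInf_le ⟨S, rfl, hG.trans (measure_mono (by simpa [h3η] using hS_cover))⟩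
  have hcard := card_le_of_inv_two_le_recoveryProb dec A hv_pos hvs hsv.ge
    (hSG.trans Set.inter_subset_right)
    (hS_sep.pairwiseDisjoint_closedBall (by rw [h3η]; linarith)) fun p hp => (hSG hp).1
  have hratio : (s / v : ℝ) = 1 + m * r ^ 2 * B ^ 2 / σ ^ 2 := by
    rw [div_eq_iff hv_pos.ne', show (s : ℝ) = v + r ^ 2 * B ^ 2 by linarith, hv]
    field_simp
  have hcard_real : (S.card : ℝ≥0∞) ≤ ENNReal.ofReal (4 * (s / v) ^ m) := by
    rwa [ENNReal.ofReal_mul (by norm_num), ENNReal.ofReal_pow (by positivity),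
      ENNReal.ofReal_ofNat]
  rw [← hratio]
  calc (covNum R (3 * η) (4 * δ) : ℝ) ≤ S.card := by exact_mod_cast hcov
    _ ≤ 4 * (s / v) ^ m := by
        simpa using ENNReal.toReal_le_of_le_ofReal (by positivity) hcard_real

theorem div_log_mul_le_of_le_four_mul_pow {c a δ : ℝ} {m : ℕ} (hc : 0 ≤ c) (ha : 1 ≤ a)
    (hca : c ≤ 4 * a ^ m) (hδ : 0 < δ) (hδ' : δ < 0.1) :
    0.15 / Real.log a * (Real.log c + Real.log (6 * δ) - 2) ≤ m := by
  have hlog_a : 0 ≤ Real.log a := Real.log_nonneg ha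
  have hlog_c : Real.log c ≤ Real.log 4 + m * Real.log a := by
    rw [← Real.log_pow, ← Real.log_mul (by norm_num) (by positivity)]
    rcases hc.eq_or_lt with rfl | hc
    · rw [Real.log_zero]
      exact Real.log_nonneg (by nlinarith [one_le_pow₀ (n := m) ha])
    · exact Real.log_le_log hc hca
  have hlog_four : Real.log 4 < 2 := by
    rw [show (4 : ℝ) = 2 ^ 2 by norm_num, Real.log_pow]
    push_cast
    linarith [Real.log_two_lt_d9]
  have hlog_δ : Real.log (6 * δ) ≤ 0 := Real.log_nonpos (by positivity) (by linarith)
  calc 0.15 / Real.log a * (Real.log c + Real.log (6 * δ) - 2)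
      ≤ 0.15 / Real.log a * (m * Real.log a) := by gcongr; linarith
    _ ≤ m := by
      rcases hlog_a.eq_or_lt with h | h
      · simp [← h]
      · rw [div_mul_eq_mul_div, mul_div_assoc, mul_div_cancel_right₀ _ h.ne']
        linarith [m.cast_nonneg (α := ℝ)]

end CompressedSensing

/-- **Lower bound, deterministic matrix** (`thm:lower`, first part).
If a (possibly randomized) recovery scheme using a fixed matrix `A` and noise level `σ`
achieves `‖x̂ - x⋆‖ ≤ O(η)` with probability `≥ 1 - δ` over `x⋆ ∼ R` (supported on a ball
of radius `r`) and the noise, then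
`m ≥ 0.15 / log(1 + m r² ‖A‖_∞² / σ²) · (log cov_{3η,4δ}(R) + log(6δ) - O(1))`. -/
theorem compressed_sensing_lower_bound_deterministic :
    ∃ Cerr CO : ℝ, 0 < Cerr ∧ 0 < CO ∧
      ∀ (n m : ℕ) (r σ η δ : ℝ) (x₀ : EucSp n) (R : Measure (EucSp n)) (A : MatR m n),
        IsProbabilityMeasure R → R (Metric.closedBall x₀ r)ᶜ = 0 →
        0 < σ → 0 < η → 0 < δ → δ < 0.1 →
        -- a Markov kernel `dec` (randomized recovery scheme taking `y` as input,
        -- for the fixed matrix `A`) succeeding with probability `≥ 1 - δ`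
        (∃ dec : Kernel (EucSp m) (EucSp n), IsMarkovKernel dec ∧
          ENNReal.ofReal (1 - δ) ≤
            ∫⁻ q, dec q.2 {z | ‖z - q.1‖ ≤ Cerr * η} ∂(jointXY R A σ)) →
        (m : ℝ) ≥ 0.15 / Real.log (1 + m * r ^ 2 * (maxRowNorm A) ^ 2 / σ ^ 2) *
          (Real.log (covNum R (3 * η) (4 * δ)) + Real.log (6 * δ) - CO) := by
  refine ⟨1, 2, one_pos, two_pos, ?_⟩
  rintro n m r σ η δ x₀ R A hR hsupp hσ hη hδ hδ' ⟨dec, hdec, hsucc⟩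
  rcases Nat.eq_zero_or_pos m with rfl | hm
  · simp
  have hball : ∀ y : EucSp n, {z | ‖z - y‖ ≤ 1 * η} = Metric.closedBall y η := fun y => by
    ext; simp [dist_eq_norm]
  simp only [hball] at hsucc
  exact CompressedSensing.div_log_mul_le_of_le_four_mul_pow (Nat.cast_nonneg _)
    (le_add_of_nonneg_right (by positivity))
    (CompressedSensing.covNum_le_of_recovery hm hsupp hσ hη hδ.le A dec hsucc) hδ hδ'

end
end

section
/- Let y be generated from x* by a Gaussian measurement process with m measurements and noise level σ. Fix x̃ ∈ ℝⁿ and parameters η > 0, c ≥ 4e². Let P_out be any distribution supported on the set S = { x ∈ ℝⁿ : ‖x − x̃‖ ≥ c(η + σ) }, and let P_{x̃} be any distribution supported within the ball of radius η centered at x̃. For a fixed matrix A, let H_{x̃} denote the distribution of y when x* ~ P_{x̃}, and let H_out denote the distribution of y when x* ~ P_out. Then E_A[ TV(H_{x̃}, H_out) ] ≥ 1 − 4 e^{ −(m/2) log( c / (4e²) ) }. -/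
open MeasureTheory ProbabilityTheory ENNReal
open scoped NNReal

noncomputable section

/-!
The test set is the ball `B_A = {y : ‖y - A x̃‖² ≤ e c (η + σ)²}`. For a fixed signal `x`,
`y - A x̃ = A (x - x̃) + ξ` has i.i.d. `N(0, W)` coordinates, `W = (‖x - x̃‖² + σ²) / m`, so
`E exp (s ‖y - A x̃‖²) = (1 - 2 s W) ^ (-m/2)`. The Chernoff bound with `s = m / (4 (η + σ)²)` when
`‖x - x̃‖ ≤ η`, and with `s = -c / (2 W)` when `‖x - x̃‖ ≥ c (η + σ)`, gives
`E_A H_x̃(B_A) ≥ 1 - ρ` and `E_A H_out(B_A) ≤ ρ` for `ρ = exp (-(m/2) log (c / (4 e²)))`, whence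
`E_A TV(H_x̃, H_out) ≥ 1 - 2ρ`.
-/

open Real

theorem lintegral_pi_eq_prod_lintegral {ι : Type*} [Fintype ι] {α : ι → Type*}
    [∀ i, MeasurableSpace (α i)] (μ : ∀ i, Measure (α i)) [∀ i, IsProbabilityMeasure (μ i)]
    {f : ∀ i, α i → ℝ≥0∞} (hf : ∀ i, Measurable (f i)) :
    ∫⁻ x, ∏ i, f i (x i) ∂Measure.pi μ = ∏ i, ∫⁻ y, f i y ∂μ i := by
  rw [lintegral_prod_eq_prod_lintegral_of_indepFun _ _
    (iIndepFun_pi fun i => (hf i).aemeasurable) fun i => (hf i).comp (measurable_pi_apply i)]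
  exact Finset.prod_congr rfl fun i _ => (measurePreserving_eval μ i).lintegral_comp (hf i)

theorem gaussianPDFReal_mul_exp_mul_add_sq {s : ℝ} {v : ℝ≥0} (hv : v ≠ 0) (h : 2 * s * v < 1)
    (u w : ℝ) :
    gaussianPDFReal 0 v w * exp (s * (u + w) ^ 2) =
      exp (s * u ^ 2 / (1 - 2 * s * v)) / √(1 - 2 * s * v) *
        gaussianPDFReal (2 * v * s * u / (1 - 2 * s * v)) (v / (1 - 2 * s * v)).toNNReal w := by
  have hv0 : (0 : ℝ) < v := lt_of_le_of_ne v.coe_nonneg (by exact_mod_cast Ne.symm hv)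
  set d := 1 - 2 * s * v with hd_def
  have hd : 0 < d := by linarith
  have hsq : √(2 * π * (v / d)) = √(2 * π * v) / √d := by
    rw [← Real.sqrt_div' _ hd.le, mul_div_assoc]
  have hexp : -(w - 0) ^ 2 / (2 * v) + s * (u + w) ^ 2 =
      s * u ^ 2 / d + -(w - 2 * v * s * u / d) ^ 2 / (2 * (v / d)) := by
    field_simp
    rw [hd_def]
    ring
  have : 0 < √d := Real.sqrt_pos.2 hd
  simp only [gaussianPDFReal, Real.coe_toNNReal _ (div_pos hv0 hd).le, hsq]
  rw [mul_assoc, ← exp_add, hexp, exp_add]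
  field_simp

theorem lintegral_exp_mul_add_sq_gaussianReal {s : ℝ} {v : ℝ≥0} (h : 2 * s * v < 1) (u : ℝ) :
    ∫⁻ w, ENNReal.ofReal (exp (s * (u + w) ^ 2)) ∂gaussianReal 0 v =
      ENNReal.ofReal (exp (s * u ^ 2 / (1 - 2 * s * v)) / √(1 - 2 * s * v)) := by
  rcases eq_or_ne v 0 with rfl | hv
  · rw [gaussianReal_zero_var, lintegral_dirac' _ (by fun_prop)]
    norm_num
  have hv' : (v / (1 - 2 * s * v)).toNNReal ≠ 0 := by
    have : (0 : ℝ) < v := lt_of_le_of_ne v.coe_nonneg (by exact_mod_cast Ne.symm hv)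
    have : 0 < 1 - 2 * s * v := by linarith
    positivity
  rw [gaussianReal_of_var_ne_zero _ hv,
    lintegral_withDensity_eq_lintegral_mul _ (measurable_gaussianPDF _ _) (by fun_prop)]
  simp only [Pi.mul_apply, gaussianPDF, ← ENNReal.ofReal_mul (gaussianPDFReal_nonneg _ _ _),
    gaussianPDFReal_mul_exp_mul_add_sq hv h,
    ENNReal.ofReal_mul (div_nonneg (exp_pos _).le (sqrt_nonneg _))]
  rw [lintegral_const_mul' _ _ ENNReal.ofReal_ne_top]
  simp only [← gaussianPDF_def, lintegral_gaussianPDF_eq_one _ hv', mul_one]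

theorem lintegral_exp_mul_add_mul_sq_gaussianReal {s c : ℝ} {v : ℝ≥0}
    (h : 2 * s * (c ^ 2 * v) < 1) (u : ℝ) :
    ∫⁻ w, ENNReal.ofReal (exp (s * (u + c * w) ^ 2)) ∂gaussianReal 0 v =
      ENNReal.ofReal (exp (s * u ^ 2 / (1 - 2 * s * (c ^ 2 * v))) /
        √(1 - 2 * s * (c ^ 2 * v))) := by
  rw [← lintegral_map (f := fun y => ENNReal.ofReal (exp (s * (u + y) ^ 2))) (by fun_prop)
    (by fun_prop), gaussianReal_map_const_mul, mul_zero]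
  exact lintegral_exp_mul_add_sq_gaussianReal (v := ⟨c ^ 2, sq_nonneg c⟩ * v) h u

theorem one_sub_two_mul_mul_one_sub_two_div_mul {s a : ℝ} (h : 1 - 2 * s * a ≠ 0) (b : ℝ) :
    (1 - 2 * s * a) * (1 - 2 * (s / (1 - 2 * s * a)) * b) = 1 - 2 * s * (a + b) := by
  field_simp
  ring

-- Gaussian smoothing of `exp (s u²)` with variance `a` and then `b` is smoothing with `a + b`.
theorem inv_sqrt_mul_exp_div_sqrt_eq {s a : ℝ} (ha : 0 < 1 - 2 * s * a) (b u : ℝ) :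
    (√(1 - 2 * s * a))⁻¹ *
        (exp (s / (1 - 2 * s * a) * u ^ 2 / (1 - 2 * (s / (1 - 2 * s * a)) * b)) /
          √(1 - 2 * (s / (1 - 2 * s * a)) * b)) =
      exp (s * u ^ 2 / (1 - 2 * s * (a + b))) / √(1 - 2 * s * (a + b)) := by
  have : 0 < √(1 - 2 * s * a) := sqrt_pos.2 ha
  rw [← one_sub_two_mul_mul_one_sub_two_div_mul ha.ne', sqrt_mul ha.le]
  field_simp

theorem lintegral_exp_mul_add_dotProduct_sq_pi_gaussianReal {k : ℕ} (c : Fin k → ℝ)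
    (v : Fin k → ℝ≥0) {s : ℝ} (h : 2 * s * ∑ i, c i ^ 2 * v i < 1) (u : ℝ) :
    ∫⁻ w, ENNReal.ofReal (exp (s * (u + c ⬝ᵥ w) ^ 2))
        ∂(Measure.pi fun i => gaussianReal 0 (v i)) =
      ENNReal.ofReal (exp (s * u ^ 2 / (1 - 2 * s * ∑ i, c i ^ 2 * v i)) /
        √(1 - 2 * s * ∑ i, c i ^ 2 * v i)) := by
  induction k generalizing u with
  | zero => simp [lintegral_const]
  | succ k ih =>
    obtain ⟨V, hV_def⟩ : ∃ V, ∑ i : Fin k, c i.succ ^ 2 * (v i.succ : ℝ) = V := ⟨_, rfl⟩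
    have hV : 0 ≤ V := hV_def ▸ Finset.sum_nonneg fun i _ => by positivity
    have hsum : ∑ i, c i ^ 2 * (v i : ℝ) = V + c 0 ^ 2 * v 0 := by
      rw [Fin.sum_univ_succ, hV_def, add_comm]
    have h0 : 0 ≤ c 0 ^ 2 * (v 0 : ℝ) := by positivity
    rw [hsum] at h ⊢
    have htail : 0 < 1 - 2 * s * V := by
      rcases le_or_gt s 0 with hs | hs <;> nlinarith
    have hhead : 0 < 1 - 2 * (s / (1 - 2 * s * V)) * (c 0 ^ 2 * v 0) := by
      refine pos_of_mul_pos_right ((one_sub_two_mul_mul_one_sub_two_div_mul htail.ne' _) ▸ ?_)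
        htail.le
      linarith
    have htail_integral : ∀ x : ℝ,
        ∫⁻ w, ENNReal.ofReal (exp (s * ((u + c 0 * x) + ∑ i : Fin k, c i.succ * w i) ^ 2))
          ∂Measure.pi (fun i : Fin k => gaussianReal 0 (v i.succ)) =
        ENNReal.ofReal (√(1 - 2 * s * V))⁻¹ *
          ENNReal.ofReal (exp (s / (1 - 2 * s * V) * (u + c 0 * x) ^ 2)) := by
      intro x
      have := ih (fun i => c i.succ) (fun i => v i.succ) (by simp only [hV_def]; linarith)
        (u + c 0 * x)
      simp only [hV_def, dotProduct] at this
      rw [this, ← ENNReal.ofReal_mul (by positivity)]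
      congr 2
      field_simp
    rw [← (measurePreserving_piFinSuccAbove (fun i => gaussianReal 0 (v i)) 0).symm.lintegral_comp
      (by fun_prop), lintegral_prod _ (by fun_prop)]
    simp only [MeasurableEquiv.piFinSuccAbove_symm_apply, Fin.insertNthEquiv_zero,
      Fin.consEquiv_apply, Fin.cons_zero, Fin.cons_succ, dotProduct, Fin.sum_univ_succ, ← add_assoc,
      Fin.zero_succAbove, htail_integral]
    rw [lintegral_const_mul' _ _ ENNReal.ofReal_ne_top,
      lintegral_exp_mul_add_mul_sq_gaussianReal (by linarith) u,
      ← ENNReal.ofReal_mul (by positivity), inv_sqrt_mul_exp_div_sqrt_eq htail]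

section

variable {m n : ℕ}

abbrev gaussianPi (ι : Type*) [Fintype ι] (v : ℝ≥0) : Measure (ι → ℝ) :=
  Measure.pi fun _ : ι => gaussianReal 0 v

theorem lintegral_exp_mul_dotProduct_add_sq (z : Fin n → ℝ) {w k : ℝ≥0} {s : ℝ}
    (h : 2 * s * (∑ j, z j ^ 2 * w + k) < 1) :
    ∫⁻ p, ENNReal.ofReal (exp (s * (p.1 ⬝ᵥ z + p.2) ^ 2))
        ∂((gaussianPi (Fin n) w).prod (gaussianReal 0 k)) =
      ENNReal.ofReal (√(1 - 2 * s * (∑ j, z j ^ 2 * w + k)))⁻¹ := by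
  have hV : 0 ≤ ∑ j, z j ^ 2 * (w : ℝ) := Finset.sum_nonneg fun j _ => by positivity
  have hk : 0 < 1 - 2 * s * k := by
    rcases le_or_gt s 0 with hs | hs <;> nlinarith [k.coe_nonneg]
  have hrow : 0 < 1 - 2 * (s / (1 - 2 * s * k)) * ∑ j, z j ^ 2 * w := by
    refine pos_of_mul_pos_right ((one_sub_two_mul_mul_one_sub_two_div_mul hk.ne' _) ▸ ?_) hk.le
    linarith
  have hnoise_integral : ∀ a : Fin n → ℝ, ∫⁻ b, ENNReal.ofReal (exp (s * (a ⬝ᵥ z + b) ^ 2))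
      ∂gaussianReal 0 k = ENNReal.ofReal (√(1 - 2 * s * k))⁻¹ *
        ENNReal.ofReal (exp (s / (1 - 2 * s * k) * (0 + z ⬝ᵥ a) ^ 2)) := by
    intro a
    rw [lintegral_exp_mul_add_sq_gaussianReal (by linarith), ← ENNReal.ofReal_mul (by positivity),
      zero_add, dotProduct_comm]
    congr 1
    field_simp
  rw [lintegral_prod _ (by fun_prop)]
  simp only [hnoise_integral]
  rw [lintegral_const_mul' _ _ ENNReal.ofReal_ne_top,
    lintegral_exp_mul_add_dotProduct_sq_pi_gaussianReal z (fun _ => w) (by linarith) 0,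
    ← ENNReal.ofReal_mul (by positivity), inv_sqrt_mul_exp_div_sqrt_eq hk, add_comm (k : ℝ)]
  simp

def sqNormMulVecAdd (z : Fin n → ℝ) (Ab : MatR m n × (Fin m → ℝ)) : ℝ :=
  ∑ i, (Ab.1 i ⬝ᵥ z + Ab.2 i) ^ 2

theorem measurable_sqNormMulVecAdd (z : Fin n → ℝ) :
    Measurable (sqNormMulVecAdd (m := m) z) := by
  unfold sqNormMulVecAdd
  fun_prop

theorem lintegral_exp_mul_sqNormMulVecAdd (z : Fin n → ℝ) {w k : ℝ≥0} {s : ℝ}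
    (h : 2 * s * (∑ j, z j ^ 2 * w + k) < 1) :
    ∫⁻ Ab, ENNReal.ofReal (exp (s * sqNormMulVecAdd z Ab))
        ∂((Measure.pi fun _ : Fin m => gaussianPi (Fin n) w).prod (gaussianPi (Fin m) k)) =
      ENNReal.ofReal (√(1 - 2 * s * (∑ j, z j ^ 2 * w + k)))⁻¹ ^ m := by
  have hrows := measurePreserving_arrowProdEquivProdArrow (Fin n → ℝ) ℝ (Fin m)
    (fun _ => gaussianPi (Fin n) w) (fun _ => gaussianReal 0 k)
  rw [← hrows.lintegral_comp (by unfold sqNormMulVecAdd; fun_prop)]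
  have hprod : ∀ r : Fin m → (Fin n → ℝ) × ℝ,
      ENNReal.ofReal (exp (s * sqNormMulVecAdd z
          (MeasurableEquiv.arrowProdEquivProdArrow _ _ _ r))) =
        ∏ i, ENNReal.ofReal (exp (s * ((r i).1 ⬝ᵥ z + (r i).2) ^ 2)) := by
    intro r
    rw [sqNormMulVecAdd, Finset.mul_sum, exp_sum,
      ENNReal.ofReal_prod_of_nonneg fun i _ => (exp_pos _).le]
    rfl
  simp only [hprod]
  rw [lintegral_pi_eq_prod_lintegral (fun _ => (gaussianPi (Fin n) w).prod (gaussianReal 0 k))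
    (f := fun _ p => ENNReal.ofReal (exp (s * (p.1 ⬝ᵥ z + p.2) ^ 2))) fun _ => by fun_prop]
  simp only [lintegral_exp_mul_dotProduct_add_sq z h, Finset.prod_const, Finset.card_univ,
    Fintype.card_fin]

-- With `s < 0` this bounds the lower tail `{Ab | sqNormMulVecAdd z Ab ≤ T}`.
theorem measure_mul_le_mul_sqNormMulVecAdd_le (z : Fin n → ℝ) {w k : ℝ≥0} {s : ℝ}
    (h : 2 * s * (∑ j, z j ^ 2 * w + k) < 1) (T : ℝ) :
    ((Measure.pi fun _ : Fin m => gaussianPi (Fin n) w).prod (gaussianPi (Fin m) k))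
        {Ab | s * T ≤ s * sqNormMulVecAdd z Ab} ≤
      ENNReal.ofReal (exp (-(s * T))) *
        ENNReal.ofReal (√(1 - 2 * s * (∑ j, z j ^ 2 * w + k)))⁻¹ ^ m := by
  calc _ ≤ _ := measure_mono fun Ab (hAb : s * T ≤ _) =>
        ENNReal.ofReal_le_ofReal (exp_le_exp.2 hAb)
    _ ≤ _ := meas_ge_le_lintegral_div
        ((measurable_sqNormMulVecAdd z).const_mul s).exp.ennreal_ofReal.aemeasurable
        (by simp [exp_pos]) ENNReal.ofReal_ne_top
    _ = _ := by
      rw [lintegral_exp_mul_sqNormMulVecAdd z h, ENNReal.div_eq_inv_mul,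
        ← ENNReal.ofReal_inv_of_pos (exp_pos _), ← exp_neg]

theorem inv_sqrt_pow_eq_exp {a : ℝ} (ha : 0 < a) (m : ℕ) :
    (√a)⁻¹ ^ m = exp (-(m / 2) * Real.log a) := by
  rw [← exp_log (sqrt_pos.2 ha), ← exp_neg, ← exp_nat_mul, Real.log_sqrt ha.le]
  ring_nf

theorem Real.log_div_four_mul_exp_two {c : ℝ} (hc : 0 < c) :
    Real.log (c / (4 * exp 2)) = Real.log c - 2 * Real.log 2 - 2 := by
  rw [Real.log_div hc.ne' (by positivity), Real.log_mul (by norm_num) (exp_pos 2).ne', Real.log_exp,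
    show (4 : ℝ) = 2 ^ 2 by norm_num, Real.log_pow]
  push_cast
  ring

-- The variance `W` of each coordinate of `A z + ξ`.
theorem sum_sq_mul_inv_add_toNNReal_div (z : Fin n → ℝ) (σ : ℝ) :
    ∑ j, z j ^ 2 * (((m : ℝ≥0)⁻¹ : ℝ≥0) : ℝ) + ((σ ^ 2 / m).toNNReal : ℝ) =
      (∑ j, z j ^ 2 + σ ^ 2) / m := by
  rw [Real.coe_toNNReal _ (by positivity), ← Finset.sum_mul]
  push_cast
  ring

theorem measure_lt_sqNormMulVecAdd_le_of_sum_sq_le (hm : 0 < m) {σ η c : ℝ}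
    (hσ : 0 ≤ σ) (hη : 0 < η) (hc : 4 * exp 2 ≤ c) {z : Fin n → ℝ} (hz : ∑ j, z j ^ 2 ≤ η ^ 2) :
    ((Measure.pi fun _ : Fin m => gaussianPi (Fin n) (m : ℝ≥0)⁻¹).prod
        (gaussianPi (Fin m) (σ ^ 2 / m).toNNReal))
        {Ab | exp 1 * c * (η + σ) ^ 2 < sqNormMulVecAdd z Ab} ≤
      ENNReal.ofReal (exp (-(m / 2) * Real.log (c / (4 * exp 2)))) := by
  have hm' : (0 : ℝ) < m := Nat.cast_pos.2 hm
  have hc0 : 0 < c := lt_of_lt_of_le (by positivity) hc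
  set s : ℝ := m / (4 * (η + σ) ^ 2)
  have hs : 0 < s := by positivity
  have h2sW : 2 * s * ((∑ j, z j ^ 2 + σ ^ 2) / m) ≤ 1 / 2 := by
    have : 2 * s * ((∑ j, z j ^ 2 + σ ^ 2) / m) = (∑ j, z j ^ 2 + σ ^ 2) / (2 * (η + σ) ^ 2) := by
      simp only [s]; field_simp; ring
    rw [this, div_le_iff₀ (by positivity)]
    nlinarith
  have hst : s * (exp 1 * c * (η + σ) ^ 2) = m * (exp 1 * c) / 4 := by
    simp only [s]; field_simp
  have hlog : -Real.log 2 ≤ Real.log (1 - 2 * s * ((∑ j, z j ^ 2 + σ ^ 2) / m)) := by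
    rw [← Real.log_inv, ← one_div]
    exact Real.log_le_log (by norm_num) (by linarith)
  have hlogc : Real.log c ≤ exp 1 * c / 2 := by
    have := Real.log_le_sub_one_of_pos hc0
    have := Real.exp_one_gt_d9
    nlinarith
  calc _ ≤ _ := measure_mono fun Ab (hAb : _ < _) => mul_le_mul_of_nonneg_left hAb.le hs.le
    _ ≤ _ := measure_mul_le_mul_sqNormMulVecAdd_le z
        (by rw [sum_sq_mul_inv_add_toNNReal_div]; linarith) _
    _ ≤ _ := by
      rw [← ENNReal.ofReal_pow (by positivity), ← ENNReal.ofReal_mul (by positivity)]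
      refine ENNReal.ofReal_le_ofReal ?_
      rw [sum_sq_mul_inv_add_toNNReal_div, inv_sqrt_pow_eq_exp (by linarith), ← exp_add, hst,
        Real.log_div_four_mul_exp_two hc0]
      refine exp_le_exp.2 ?_
      nlinarith [Real.log_pos one_lt_two]

theorem measure_sqNormMulVecAdd_le_le_of_le_sum_sq (hm : 0 < m) {σ η c : ℝ}
    (hσ : 0 ≤ σ) (hη : 0 < η) (hc : 4 * exp 2 ≤ c) {z : Fin n → ℝ}
    (hz : (c * (η + σ)) ^ 2 ≤ ∑ j, z j ^ 2) :
    ((Measure.pi fun _ : Fin m => gaussianPi (Fin n) (m : ℝ≥0)⁻¹).prod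
        (gaussianPi (Fin m) (σ ^ 2 / m).toNNReal))
        {Ab | sqNormMulVecAdd z Ab ≤ exp 1 * c * (η + σ) ^ 2} ≤
      ENNReal.ofReal (exp (-(m / 2) * Real.log (c / (4 * exp 2)))) := by
  have hm' : (0 : ℝ) < m := Nat.cast_pos.2 hm
  have hc0 : 0 < c := lt_of_lt_of_le (by positivity) hc
  set W : ℝ := (∑ j, z j ^ 2 + σ ^ 2) / m
  have hW : 0 < W := by
    have : 0 < (c * (η + σ)) ^ 2 := by positivity
    exact div_pos (by nlinarith) hm'
  set s : ℝ := -(c / (2 * W))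
  have hs : s < 0 := by simp only [s]; have := div_pos hc0 (mul_pos two_pos hW); linarith
  have h2sW : 1 - 2 * s * W = 1 + c := by simp only [s]; field_simp; ring
  have hst : -(s * (exp 1 * c * (η + σ) ^ 2)) ≤ m * exp 1 / 2 := by
    have hmW : (c * (η + σ)) ^ 2 ≤ m * W := by
      simp only [W]; rw [mul_div_cancel₀ _ hm'.ne']; nlinarith
    simp only [s]
    rw [neg_mul, neg_neg, div_mul_eq_mul_div, div_le_iff₀ (by positivity)]
    nlinarith [mul_le_mul_of_nonneg_left hmW (exp_pos 1).le]
  have hlog : Real.log c ≤ Real.log (1 + c) := Real.log_le_log hc0 (by linarith)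
  have he : exp 1 ≤ 2 * Real.log 2 + 2 := by
    have := Real.exp_one_lt_d9
    have := Real.log_two_gt_d9
    linarith
  calc _ ≤ _ := measure_mono fun Ab (hAb : _ ≤ _) => mul_le_mul_of_nonpos_left hAb hs.le
    _ ≤ _ := measure_mul_le_mul_sqNormMulVecAdd_le z
        (by rw [sum_sq_mul_inv_add_toNNReal_div]; nlinarith) _
    _ ≤ _ := by
      rw [← ENNReal.ofReal_pow (by positivity), ← ENNReal.ofReal_mul (by positivity)]
      refine ENNReal.ofReal_le_ofReal ?_
      rw [sum_sq_mul_inv_add_toNNReal_div, h2sW, inv_sqrt_pow_eq_exp (by linarith), ← exp_add,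
        Real.log_div_four_mul_exp_two hc0]
      refine exp_le_exp.2 ?_
      nlinarith

theorem lintegral_prod_preimage_mk_comm {α β γ : Type*} [MeasurableSpace α] [MeasurableSpace β]
    [MeasurableSpace γ] (μ : Measure α) (ν : Measure β) (ρ : Measure γ) [SFinite μ] [SFinite ν]
    [SFinite ρ] {E : Set (α × β × γ)} (hE : MeasurableSet E) :
    ∫⁻ a, (ν.prod ρ) (Prod.mk a ⁻¹' E) ∂μ =
      ∫⁻ b, (μ.prod ρ) ((fun p => (p.1, b, p.2)) ⁻¹' E) ∂ν := by
  have hslice : Measurable fun ab : α × β => ρ {c | (ab.1, ab.2, c) ∈ E} :=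
    measurable_measure_prodMk_left (MeasurableEquiv.prodAssoc.measurable hE)
  calc ∫⁻ a, (ν.prod ρ) (Prod.mk a ⁻¹' E) ∂μ = ∫⁻ a, ∫⁻ b, ρ {c | (a, b, c) ∈ E} ∂ν ∂μ :=
        lintegral_congr fun a => Measure.prod_apply (measurable_prodMk_left hE)
    _ = ∫⁻ b, ∫⁻ a, ρ {c | (a, b, c) ∈ E} ∂μ ∂ν := lintegral_lintegral_swap hslice.aemeasurable
    _ = _ := lintegral_congr fun b => (Measure.prod_apply
      (hE.preimage (by fun_prop : Measurable fun p : α × γ => (p.1, b, p.2)))).symm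

@[fun_prop]
theorem measurable_applyMat (A : MatR m n) : Measurable (applyMat A) := by
  unfold applyMat
  fun_prop

theorem obsDist_eq_map (P : Measure (EucSp n)) [SFinite P] (A : MatR m n) (σ : ℝ) :
    obsDist P A σ = (P.prod (gaussianPi (Fin m) (σ ^ 2 / m).toNNReal)).map
      fun p => applyMat A p.1 + WithLp.toLp 2 p.2 := by
  have hnoise : gaussianVec m (σ ^ 2 / m).toNNReal =
      (gaussianPi (Fin m) (σ ^ 2 / m).toNNReal).map (WithLp.toLp 2) := rfl
  rw [obsDist, jointXY, hnoise, ← Measure.map_id (μ := P),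
    Measure.map_prod_map _ _ measurable_id (WithLp.measurable_toLp 2 _), Measure.map_id,
    Measure.map_map measurable_snd (by fun_prop), Measure.map_map (by fun_prop) (by fun_prop)]
  rfl

theorem norm_applyMat_add_sub_sq (A : MatR m n) (x xt : EucSp n) (b : Fin m → ℝ) :
    ‖applyMat A x + WithLp.toLp 2 b - applyMat A xt‖ ^ 2 =
      sqNormMulVecAdd (x - xt).ofLp (A, b) := by
  rw [EuclideanSpace.real_norm_sq_eq, sqNormMulVecAdd]
  refine Finset.sum_congr rfl fun i _ => ?_
  change (A i ⬝ᵥ x.ofLp + b i - A i ⬝ᵥ xt.ofLp) ^ 2 = (A i ⬝ᵥ (x.ofLp - xt.ofLp) + b i) ^ 2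
  rw [dotProduct_sub]
  ring

theorem measure_sub_le_ofReal_tvDist {α : Type*} [MeasurableSpace α] (μ ν : Measure α)
    [IsFiniteMeasure μ] [IsFiniteMeasure ν] {s : Set α} (hs : MeasurableSet s) :
    μ s - ν s ≤ ENNReal.ofReal (tvDist μ ν) := by
  have hbdd : BddAbove (Set.range fun t : {t : Set α // MeasurableSet t} =>
      (μ t.1).toReal - (ν t.1).toReal) := by
    refine ⟨(μ Set.univ).toReal, ?_⟩
    rintro _ ⟨t, rfl⟩
    have := ENNReal.toReal_mono (measure_ne_top μ _) (measure_mono (Set.subset_univ t.1))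
    linarith [ENNReal.toReal_nonneg (a := ν t.1)]
  calc μ s - ν s = ENNReal.ofReal (μ s).toReal - ENNReal.ofReal (ν s).toReal := by
        simp only [ENNReal.ofReal_toReal (measure_ne_top _ _)]
    _ = ENNReal.ofReal ((μ s).toReal - (ν s).toReal) :=
        (ENNReal.ofReal_sub _ ENNReal.toReal_nonneg).symm
    _ ≤ ENNReal.ofReal (tvDist μ ν) := ENNReal.ofReal_le_ofReal (le_ciSup hbdd ⟨s, hs⟩)

instance : IsProbabilityMeasure (gaussMatrix m n) := by
  unfold gaussMatrix
  infer_instance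

instance (P : Measure (EucSp n)) [IsProbabilityMeasure P] (A : MatR m n) (σ : ℝ) :
    IsProbabilityMeasure (obsDist P A σ) := by
  rw [obsDist_eq_map]
  exact Measure.isProbabilityMeasure_map (by fun_prop)

theorem measurableSet_sqNormMulVecAdd_le (xt : EucSp n) (t : ℝ) :
    MeasurableSet {q : MatR m n × EucSp n × (Fin m → ℝ) |
      sqNormMulVecAdd (q.2.1 - xt).ofLp (q.1, q.2.2) ≤ t} := by
  refine measurableSet_le ?_ measurable_const
  unfold sqNormMulVecAdd
  fun_prop

theorem obsDist_setOf_norm_sub_sq_le (P : Measure (EucSp n)) [SFinite P] (A : MatR m n)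
    (σ : ℝ) (xt : EucSp n) (t : ℝ) :
    obsDist P A σ {y | ‖y - applyMat A xt‖ ^ 2 ≤ t} =
      (P.prod (gaussianPi (Fin m) (σ ^ 2 / m).toNNReal)) (Prod.mk A ⁻¹'
        {q | sqNormMulVecAdd (q.2.1 - xt).ofLp (q.1, q.2.2) ≤ t}) := by
  rw [obsDist_eq_map,
    Measure.map_apply (by fun_prop) (measurableSet_le (by fun_prop) (by fun_prop))]
  simp only [Set.preimage_ofPred_eq, norm_applyMat_add_sub_sq]

theorem lintegral_obsDist_setOf_norm_sub_sq_le (P : Measure (EucSp n)) [SFinite P] (σ : ℝ)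
    (xt : EucSp n) (t : ℝ) :
    ∫⁻ A, obsDist P A σ {y | ‖y - applyMat A xt‖ ^ 2 ≤ t} ∂gaussMatrix m n =
      ∫⁻ x, ((gaussMatrix m n).prod (gaussianPi (Fin m) (σ ^ 2 / m).toNNReal))
        {Ab | sqNormMulVecAdd (x - xt).ofLp Ab ≤ t} ∂P := by
  simp only [obsDist_setOf_norm_sub_sq_le]
  exact lintegral_prod_preimage_mk_comm _ _ _ (measurableSet_sqNormMulVecAdd_le xt t)

theorem measurable_obsDist_setOf_norm_sub_sq_le (P : Measure (EucSp n)) [SFinite P] (σ : ℝ)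
    (xt : EucSp n) (t : ℝ) :
    Measurable fun A : MatR m n => obsDist P A σ {y | ‖y - applyMat A xt‖ ^ 2 ≤ t} := by
  simp only [obsDist_setOf_norm_sub_sq_le]
  exact measurable_measure_prodMk_left (measurableSet_sqNormMulVecAdd_le xt t)

theorem one_sub_le_lintegral_obsDist_of_ae_mem_closedBall (hm : 0 < m) {σ η c : ℝ} (hσ : 0 ≤ σ)
    (hη : 0 < η) (hc : 4 * exp 2 ≤ c) {xt : EucSp n} {P : Measure (EucSp n)}
    [IsProbabilityMeasure P] (hP : P (Metric.closedBall xt η)ᶜ = 0) :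
    1 - ENNReal.ofReal (exp (-(m / 2) * Real.log (c / (4 * exp 2)))) ≤
      ∫⁻ A, obsDist P A σ {y | ‖y - applyMat A xt‖ ^ 2 ≤ exp 1 * c * (η + σ) ^ 2}
        ∂gaussMatrix m n := by
  rw [lintegral_obsDist_setOf_norm_sub_sq_le]
  calc _ = ∫⁻ _, (1 - ENNReal.ofReal (exp (-(m / 2) * Real.log (c / (4 * exp 2))))) ∂P := by simp
    _ ≤ _ := lintegral_mono_ae ?_
  filter_upwards [measure_eq_zero_iff_ae_notMem.1 hP] with x hx
  have hz : ∑ j, (x - xt).ofLp j ^ 2 ≤ η ^ 2 := by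
    rw [← EuclideanSpace.real_norm_sq_eq, ← dist_eq_norm]
    exact pow_le_pow_left₀ dist_nonneg (by simpa using hx) 2
  have hcompl : {Ab | sqNormMulVecAdd (x - xt).ofLp Ab ≤ exp 1 * c * (η + σ) ^ 2} =
      {Ab : MatR m n × (Fin m → ℝ) |
        exp 1 * c * (η + σ) ^ 2 < sqNormMulVecAdd (x - xt).ofLp Ab}ᶜ := by
    ext; simp [not_lt]
  rw [hcompl, prob_compl_eq_one_sub (measurableSet_lt measurable_const
    (measurable_sqNormMulVecAdd _))]
  exact tsub_le_tsub_left (measure_lt_sqNormMulVecAdd_le_of_sum_sq_le hm hσ hη hc hz) 1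

theorem lintegral_obsDist_le_of_ae_far (hm : 0 < m) {σ η c : ℝ} (hσ : 0 ≤ σ)
    (hη : 0 < η) (hc : 4 * exp 2 ≤ c) {xt : EucSp n} {P : Measure (EucSp n)}
    [IsProbabilityMeasure P] (hP : P {x | ‖x - xt‖ < c * (η + σ)} = 0) :
    ∫⁻ A, obsDist P A σ {y | ‖y - applyMat A xt‖ ^ 2 ≤ exp 1 * c * (η + σ) ^ 2}
        ∂gaussMatrix m n ≤
      ENNReal.ofReal (exp (-(m / 2) * Real.log (c / (4 * exp 2)))) := by
  rw [lintegral_obsDist_setOf_norm_sub_sq_le]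
  calc _ ≤ ∫⁻ _, ENNReal.ofReal (exp (-(m / 2) * Real.log (c / (4 * exp 2)))) ∂P :=
        lintegral_mono_ae ?_
    _ = _ := by simp
  filter_upwards [measure_eq_zero_iff_ae_notMem.1 hP] with x hx
  have hz : (c * (η + σ)) ^ 2 ≤ ∑ j, (x - xt).ofLp j ^ 2 := by
    rw [← EuclideanSpace.real_norm_sq_eq]
    have hc0 : 0 < c := lt_of_lt_of_le (by positivity) hc
    exact pow_le_pow_left₀ (by positivity) (by simpa using hx) 2
  exact measure_sqNormMulVecAdd_le_le_of_le_sum_sq hm hσ hη hc hz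

end

/-- **Separated supports give high TV distance in expectation** (`lemma: noisy pout tv improved`).
If `P_x̃` lives in the `η`-ball around `x̃` and `P_out` lives at distance `≥ c(η+σ)` from `x̃`,
`c ≥ 4e²`, then for Gaussian measurements with noise level `σ`,
`E_A[TV(H_x̃, H_out)] ≥ 1 - 4 e^{-(m/2) log(c/(4e²))}`. -/
theorem noisy_pout_tv (n m : ℕ) (σ η c : ℝ) (hσ : 0 ≤ σ) (hη : 0 < η)
    (hc : 4 * Real.exp 2 ≤ c)
    (xt : EucSp n) (Pout Pt : Measure (EucSp n))
    (hPout : IsProbabilityMeasure Pout) (hPt : IsProbabilityMeasure Pt)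
    (hout : Pout {x | ‖x - xt‖ < c * (η + σ)} = 0)
    (hin : Pt (Metric.closedBall xt η)ᶜ = 0) :
    ENNReal.ofReal (1 - 4 * Real.exp (-(m / 2) * Real.log (c / (4 * Real.exp 2)))) ≤
      ∫⁻ A, ENNReal.ofReal (tvDist (obsDist Pt A σ) (obsDist Pout A σ))
        ∂(gaussMatrix m n) := by
  rcases Nat.eq_zero_or_pos m with rfl | hm
  · refine (ENNReal.ofReal_eq_zero.2 ?_).trans_le zero_le
    norm_num
  set ρ := exp (-(m / 2) * Real.log (c / (4 * exp 2)))
  set B : MatR m n → Set (EucSp m) :=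
    fun A => {y | ‖y - applyMat A xt‖ ^ 2 ≤ exp 1 * c * (η + σ) ^ 2}
  have hρ : 0 ≤ ρ := (exp_pos _).le
  calc ENNReal.ofReal (1 - 4 * ρ) ≤ (1 - ENNReal.ofReal ρ) - ENNReal.ofReal ρ := by
        rw [← ENNReal.ofReal_one, ← ENNReal.ofReal_sub _ hρ, ← ENNReal.ofReal_sub _ hρ]
        exact ENNReal.ofReal_le_ofReal (by linarith)
    _ ≤ (∫⁻ A, obsDist Pt A σ (B A) ∂gaussMatrix m n) -
          ∫⁻ A, obsDist Pout A σ (B A) ∂gaussMatrix m n :=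
        tsub_le_tsub (one_sub_le_lintegral_obsDist_of_ae_mem_closedBall hm hσ hη hc hin)
          (lintegral_obsDist_le_of_ae_far hm hσ hη hc hout)
    _ ≤ ∫⁻ A, obsDist Pt A σ (B A) - obsDist Pout A σ (B A) ∂gaussMatrix m n :=
        lintegral_sub_le _ _ (measurable_obsDist_setOf_norm_sub_sq_le Pout σ xt _)
    _ ≤ _ := lintegral_mono fun A =>
        measure_sub_le_ofReal_tvDist _ _ (measurableSet_le (by fun_prop) (by fun_prop))
end
end

section
/- Let (x, x̂) be jointly distributed random vectors over ℝⁿ × ℝⁿ, where x ~ R, and suppose Pr[ ‖x − x̂‖ ≤ η ] ≥ 1 − δ. Then for any τ ≤ 1 − 3δ with δ < 1/3: 0.99 · τ · (1 − 2δ) · log cov_{3η, τ + 3δ}(R) ≤ I(x; x̂) + 1.98. -/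
open MeasureTheory ProbabilityTheory ENNReal
open scoped NNReal

noncomputable section

/-!
Greedily pick fewer than `N = cov_{3η, τ+3δ}(R)` balls of radius `3η`, each capturing a
`0.99`-fraction of the largest `R`-mass still uncovered. Fewer than `N` balls miss mass more
than `τ + 3δ`, so the event `F = {‖x - x̂‖ ≤ η, x uncovered}` has `μ`-probability at least
`τ + 2δ`; under the product of the marginals every slice of `F` lies in the uncovered part of a
`3η`-ball, so `F` has probability at most `1 / (0.99 (N - 1))`. The Donsker–Varadhan inequality
with test function `log (0.99 (N - 1)) · 1_F` then gives
`I(x; x̂) ≥ μ(F) log (0.99 (N - 1)) - log 2`.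
-/

open Set InformationTheory

section Greedy

variable {α ι : Type*} [MeasurableSpace α]

lemma ENNReal.exists_mul_iSup_le [Nonempty ι] (f : ι → ℝ≥0∞) (hf : ⨆ i, f i ≠ ∞)
    {θ : ℝ≥0∞} (hθ : θ < 1) : ∃ i, θ * ⨆ j, f j ≤ f i := by
  rcases eq_or_ne (⨆ j, f j) 0 with h0 | h0
  · exact ⟨Classical.arbitrary ι, by simp [h0]⟩
  · obtain ⟨i, hi⟩ := lt_iSup_iff.mp ((ENNReal.mul_lt_mul_left h0 hf hθ).trans_eq (one_mul _))
    exact ⟨i, hi.le⟩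

/-- Greedy covering: adding, one at a time, a set that captures a `θ`-fraction of the largest
mass not yet covered. -/
lemma exists_finset_card_le_mul_iSup_measure_diff_le (R : Measure α) [IsFiniteMeasure R]
    [Nonempty ι] (A : ι → Set α) (hA : ∀ i, MeasurableSet (A i)) {θ : ℝ≥0∞} (hθ : θ < 1)
    (m : ℕ) : ∃ s : Finset ι, s.card ≤ m ∧
      m * θ * ⨆ i, R (A i \ ⋃ j ∈ s, A j) ≤ R (⋃ j ∈ s, A j) := by
  classical
  induction m with
  | zero => exact ⟨∅, by simp⟩
  | succ m ih =>
    obtain ⟨s, hs, hmass⟩ := ih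
    obtain ⟨i, hi⟩ := ENNReal.exists_mul_iSup_le (fun i => R (A i \ ⋃ j ∈ s, A j))
      (ne_top_of_le_ne_top (measure_ne_top R univ) (iSup_le fun _ => measure_mono (subset_univ _)))
      hθ
    have hunion : ⋃ j ∈ insert i s, A j = (⋃ j ∈ s, A j) ∪ (A i \ ⋃ j ∈ s, A j) := by
      rw [Finset.set_biUnion_insert, union_comm, union_sdiff_self]
    have hanti : ⨆ k, R (A k \ ⋃ j ∈ insert i s, A j) ≤ ⨆ k, R (A k \ ⋃ j ∈ s, A j) :=
      iSup_mono fun k => measure_mono <|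
        sdiff_subset_sdiff_right (by rw [hunion]; exact subset_union_left)
    refine ⟨insert i s, (Finset.card_insert_le _ _).trans (Nat.succ_le_succ hs), ?_⟩
    calc ((m + 1 : ℕ) : ℝ≥0∞) * θ * ⨆ k, R (A k \ ⋃ j ∈ insert i s, A j)
        ≤ (m * θ + θ) * ⨆ k, R (A k \ ⋃ j ∈ s, A j) := by
          push_cast
          rw [add_mul, one_mul]
          gcongr
      _ ≤ R (⋃ j ∈ s, A j) + R (A i \ ⋃ j ∈ s, A j) := by
          rw [add_mul]
          exact add_le_add hmass hi
      _ = R (⋃ j ∈ insert i s, A j) := by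
          rw [hunion, measure_union disjoint_sdiff_self_right
            ((hA i).diff (s.measurableSet_biUnion fun j _ => hA j))]

end Greedy

lemma MeasureTheory.Measure.prod_apply_le_iSup_measure_slice {α β : Type*} [MeasurableSpace α]
    [MeasurableSpace β] (R : Measure α) [SFinite R] (Q : Measure β) [IsProbabilityMeasure Q]
    {F : Set (α × β)} (hF : MeasurableSet F) :
    R.prod Q F ≤ ⨆ y, R ((fun x => (x, y)) ⁻¹' F) := by
  rw [Measure.prod_apply_symm hF]
  calc ∫⁻ y, R ((fun x => (x, y)) ⁻¹' F) ∂Q ≤ ∫⁻ _, ⨆ y, R ((fun x => (x, y)) ⁻¹' F) ∂Q :=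
        lintegral_mono fun y => le_iSup (fun y => R ((fun x => (x, y)) ⁻¹' F)) y
    _ = ⨆ y, R ((fun x => (x, y)) ⁻¹' F) := by simp

section KullbackLeibler

variable {α : Type*} [MeasurableSpace α] {μ ν : Measure α}
  [IsProbabilityMeasure μ] [IsProbabilityMeasure ν]

lemma klDivE_eq_klDiv : klDivE μ ν = klDiv μ ν := by
  rw [klDivE, klDiv_def]
  simp only [llr_def, probReal_univ, add_sub_cancel_right]
  classical
  exact if_congr Iff.rfl rfl rfl

/-- The Donsker–Varadhan inequality: compare `μ` with the tilted measure `ν.tilted f` and use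
Gibbs' inequality. -/
lemma integral_sub_log_integral_exp_le_integral_llr (hμν : μ ≪ ν)
    (h_int : Integrable (llr μ ν) μ) {f : α → ℝ} (hfμ : Integrable f μ)
    (hfν : Integrable (fun x => Real.exp (f x)) ν) :
    ∫ x, f x ∂μ - Real.log (∫ x, Real.exp (f x) ∂ν) ≤ ∫ x, llr μ ν x ∂μ := by
  have := isProbabilityMeasure_tilted hfν
  have hgibbs := integral_llr_add_sub_measure_univ_nonneg
    (hμν.trans (absolutelyContinuous_tilted hfν)) (integrable_llr_tilted_right hμν hfμ h_int hfν)
  rw [integral_llr_tilted_right hμν hfμ hfν h_int] at hgibbs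
  simp only [probReal_univ, add_sub_cancel_right] at hgibbs
  linarith

lemma mul_sub_log_two_le_integral_llr (hμν : μ ≪ ν) (h_int : Integrable (llr μ ν) μ)
    {F : Set α} (hF : MeasurableSet F) {s : ℝ} (hs : Real.exp s * ν.real F ≤ 1) :
    μ.real F * s - Real.log 2 ≤ ∫ x, llr μ ν x ∂μ := by
  have hexp : (fun x => Real.exp (F.indicator (fun _ => s) x))
      = fun x => 1 + F.indicator (fun _ => Real.exp s - 1) x := by
    ext x
    by_cases hx : x ∈ F <;> simp [hx]
  have hfν : Integrable (fun x => Real.exp (F.indicator (fun _ => s) x)) ν := by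
    rw [hexp]
    exact (integrable_const 1).add ((integrable_const _).indicator hF)
  have hpartition : ∫ x, Real.exp (F.indicator (fun _ => s) x) ∂ν ≤ 2 := by
    rw [hexp, integral_add (integrable_const 1) ((integrable_const _).indicator hF),
      integral_indicator_const _ hF]
    simp only [integral_const, probReal_univ, smul_eq_mul]
    linarith [measureReal_nonneg (μ := ν) (s := F)]
  have hdv := integral_sub_log_integral_exp_le_integral_llr hμν h_int
    ((integrable_const s).indicator hF) hfν
  rw [integral_indicator_const _ hF, smul_eq_mul] at hdv
  have := Real.log_le_log (integral_exp_pos hfν) hpartition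
  linarith

lemma ofReal_mul_sub_log_two_le_klDiv {F : Set α} (hF : MeasurableSet F) {s : ℝ}
    (hs : Real.exp s * ν.real F ≤ 1) : ENNReal.ofReal (μ.real F * s - Real.log 2) ≤ klDiv μ ν := by
  by_cases hμν : μ ≪ ν
  swap; · simp [hμν]
  by_cases h_int : Integrable (llr μ ν) μ
  swap; · simp [h_int]
  rw [klDiv_of_ac_of_integrable hμν h_int]
  simp only [probReal_univ, add_sub_cancel_right]
  exact ENNReal.ofReal_le_ofReal (mul_sub_log_two_le_integral_llr hμν h_int hF hs)

end KullbackLeibler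

lemma measure_biUnion_closedBall_lt_of_card_lt_covNum {n : ℕ} {R : Measure (EucSp n)}
    {η δ : ℝ} {s : Finset (EucSp n)} (hs : s.card < covNum R η δ) :
    R (⋃ x ∈ s, Metric.closedBall x η) < ENNReal.ofReal (1 - δ) := by
  by_contra! h
  exact hs.not_ge (Nat.sInf_le ⟨s, rfl, h⟩)

lemma exists_measurableSet_le_measureReal_and_mul_measureReal_prod_le {n : ℕ}
    {R : Measure (EucSp n)} [IsProbabilityMeasure R] {μ : Measure (EucSp n × EucSp n)}
    [IsProbabilityMeasure μ] (hmarg : μ.map Prod.fst = R) (Q : Measure (EucSp n))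
    [IsProbabilityMeasure Q] {η δ τ : ℝ} (herr : ENNReal.ofReal (1 - δ) ≤ μ {q | ‖q.1 - q.2‖ ≤ η})
    {m : ℕ} (hm : m < covNum R (3 * η) (τ + 3 * δ)) :
    ∃ F, MeasurableSet F ∧ τ + 2 * δ ≤ μ.real F ∧ 0.99 * m * (R.prod Q).real F ≤ 1 := by
  obtain ⟨s, hs, hgreedy⟩ := exists_finset_card_le_mul_iSup_measure_diff_le R
    (fun c => Metric.closedBall c (3 * η)) (fun _ => measurableSet_closedBall)
    (ENNReal.ofReal_lt_one.mpr (by norm_num : (0.99 : ℝ) < 1)) m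
  set V := ⋃ c ∈ s, Metric.closedBall c (3 * η)
  set E := {q : EucSp n × EucSp n | ‖q.1 - q.2‖ ≤ η}
  have hV : MeasurableSet V := s.measurableSet_biUnion fun _ _ => measurableSet_closedBall
  have hE : MeasurableSet E := measurableSet_le (by fun_prop) measurable_const
  have hF : MeasurableSet (E \ Prod.fst ⁻¹' V) := hE.diff (measurable_fst hV)
  refine ⟨E \ Prod.fst ⁻¹' V, hF, ?_, ?_⟩
  · have hRV : R.real V < 1 - (τ + 3 * δ) := ENNReal.toReal_lt_of_lt_ofReal
      (measure_biUnion_closedBall_lt_of_card_lt_covNum (hs.trans_lt hm))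
    have hμE : 1 - δ ≤ μ.real E := (ENNReal.ofReal_le_iff_le_toReal (measure_ne_top _ _)).1 herr
    have hμV : μ.real (Prod.fst ⁻¹' V) = R.real V := by
      rw [← hmarg, map_measureReal_apply measurable_fst hV]
    linarith [le_measureReal_sdiff (μ := μ) (s₁ := E) (s₂ := Prod.fst ⁻¹' V)]
  · have hslice : R.prod Q (E \ Prod.fst ⁻¹' V) ≤ ⨆ c, R (Metric.closedBall c (3 * η) \ V) := by
      refine (Measure.prod_apply_le_iSup_measure_slice R Q hF).trans
        (iSup_mono fun y => measure_mono fun x ⟨hxy, hxV⟩ => ⟨?_, hxV⟩)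
      rw [Metric.mem_closedBall, dist_eq_norm]
      linarith [norm_nonneg (x - y), show ‖x - y‖ ≤ η from hxy]
    have hle : (m : ℝ≥0∞) * ENNReal.ofReal 0.99 * R.prod Q (E \ Prod.fst ⁻¹' V) ≤ 1 :=
      (mul_le_mul_right hslice _).trans (hgreedy.trans prob_le_one)
    have := ENNReal.toReal_mono ENNReal.one_ne_top hle
    rw [ENNReal.toReal_mul, ENNReal.toReal_mul, ENNReal.toReal_ofReal (by norm_num)] at this
    simpa [measureReal_def, mul_comm] using this

lemma ofReal_le_ofReal_div_add_ofReal {x y z d : ℝ} (hz : 0 < z) (h : x ≤ y / z + d) :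
    ENNReal.ofReal x ≤ ENNReal.ofReal y / ENNReal.ofReal z + ENNReal.ofReal d := by
  rw [← ENNReal.ofReal_div_of_pos hz]
  exact (ENNReal.ofReal_le_ofReal h).trans ENNReal.ofReal_add_le

lemma mul_logb_two_natCast_le {N : ℕ} (hN : N ≤ 4) {c : ℝ} (hc : c ≤ 0.99) :
    c * Real.logb 2 N ≤ 1.98 := by
  rcases N.eq_zero_or_pos with rfl | hpos
  · norm_num
  have hN1 : (1 : ℝ) ≤ N := by exact_mod_cast hpos
  have hlog_nonneg : 0 ≤ Real.logb 2 N := Real.logb_nonneg one_lt_two hN1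
  have hlog_le : Real.logb 2 N ≤ 2 := by
    calc Real.logb 2 N ≤ Real.logb 2 4 :=
          Real.logb_le_logb_of_le one_lt_two (by linarith) (by exact_mod_cast hN)
      _ = 2 := by
          rw [show (4 : ℝ) = 2 ^ (2 : ℝ) by norm_num, Real.logb_rpow two_pos one_lt_two.ne']
  nlinarith

lemma mul_logb_two_succ_le {m : ℕ} (hm : 4 ≤ m) {a c : ℝ} (ha : 0 ≤ a) (hca : c ≤ a)
    (hc : c ≤ 1) :
    c * Real.logb 2 (m + 1) ≤ (a * Real.log (0.99 * m) - Real.log 2) / Real.log 2 + 1.98 := by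
  have hm' : (4 : ℝ) ≤ m := by exact_mod_cast hm
  have hlog2 : 0.6931 < Real.log 2 := by linarith [Real.log_two_gt_d9]
  have hL : 0 ≤ Real.log (0.99 * m) := Real.log_nonneg (by linarith)
  have hratio : Real.log (m + 1) ≤ Real.log (0.99 * m) + 0.27 := by
    have h := Real.log_le_sub_one_of_pos (x := (m + 1) / (0.99 * m)) (by positivity)
    rw [Real.log_div (by positivity) (by positivity)] at h
    have : (m + 1) / (0.99 * m) ≤ (1.27 : ℝ) := by
      rw [div_le_iff₀ (by positivity)]; linarith
    linarith
  have hkey : c * Real.log (m + 1) ≤ a * Real.log (0.99 * m) + 0.98 * Real.log 2 := by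
    rcases le_total c 0 with hc0 | hc0
    · nlinarith [Real.log_nonneg (show (1 : ℝ) ≤ m + 1 by linarith)]
    · nlinarith
  rw [Real.logb, mul_div_assoc', div_add' _ _ _ (by positivity), div_le_div_iff_of_pos_right
    (by positivity)]
  linarith

/-- **Fano variant for approximate covering numbers** (`lem: covering continuous`).
If `x ∼ R` and `Pr[‖x - x̂‖ ≤ η] ≥ 1 - δ`, then for any `τ ≤ 1 - 3δ`, `δ < 1/3`:
`0.99 τ (1 - 2δ) log cov_{3η, τ+3δ}(R) ≤ I(x; x̂) + 1.98` (information measured in bits). -/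
theorem fano_variant_covering (n : ℕ) (η δ τ : ℝ) (hδ : δ < 1 / 3) (hτ : τ ≤ 1 - 3 * δ)
    (R : Measure (EucSp n)) (hR : IsProbabilityMeasure R)
    (μ : Measure (EucSp n × EucSp n)) (hμ : IsProbabilityMeasure μ)
    (hmarg : μ.map Prod.fst = R)
    (herr : ENNReal.ofReal (1 - δ) ≤ μ {q | ‖q.1 - q.2‖ ≤ η}) :
    ENNReal.ofReal (0.99 * τ * (1 - 2 * δ) * Real.logb 2 (covNum R (3 * η) (τ + 3 * δ)))
      ≤ mutualInfoBits μ + ENNReal.ofReal 1.98 := by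
  have hδ0 : 0 ≤ δ := by
    have := ENNReal.ofReal_le_one.mp (herr.trans prob_le_one)
    linarith
  set N := covNum R (3 * η) (τ + 3 * δ)
  rcases le_or_gt N 4 with hN | hN
  · exact le_add_left (ENNReal.ofReal_le_ofReal (mul_logb_two_natCast_le hN (by nlinarith)))
  have := Measure.isProbabilityMeasure_map (μ := μ) measurable_snd.aemeasurable
  obtain ⟨F, hF, hμF, hνF⟩ := exists_measurableSet_le_measureReal_and_mul_measureReal_prod_le
    hmarg (μ.map Prod.snd) herr (Nat.sub_one_lt (by omega) : N - 1 < N)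
  have hm : (4 : ℝ) ≤ (N - 1 : ℕ) := by exact_mod_cast (by omega : 4 ≤ N - 1)
  have hN' : (N : ℝ) = ((N - 1 : ℕ) : ℝ) + 1 := by rw [Nat.cast_sub (by omega)]; ring
  have ha : 0 ≤ μ.real F := measureReal_nonneg
  rw [mutualInfoBits, mutualInfoE, hmarg, klDivE_eq_klDiv, hN']
  calc _ ≤ ENNReal.ofReal (μ.real F * Real.log (0.99 * (N - 1 : ℕ)) - Real.log 2) /
        ENNReal.ofReal (Real.log 2) + ENNReal.ofReal 1.98 := by
        refine ofReal_le_ofReal_div_add_ofReal (Real.log_pos one_lt_two)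
          (mul_logb_two_succ_le (by omega) ha ?_ (by nlinarith))
        rcases le_total τ 0 with hτ0 | hτ0 <;> nlinarith
    _ ≤ _ := by
        gcongr
        exact ofReal_mul_sub_log_two_le_klDiv hF (by rwa [Real.exp_log (by positivity)])
end
end

section
/- Let x be uniformly distributed over an arbitrary finite set S, and let E be a binary random variable (jointly distributed with x) with Pr[E = 1] ≥ 1 − δ for some δ ∈ [0, 1). Then the conditional entropy satisfies H(x | E = 1) ≥ log|S| − 1/(1 − δ). -/
open MeasureTheory ProbabilityTheory ENNReal
open scoped NNReal

noncomputable section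

/-- Shannon entropy (in bits) of a measure concentrated on the finite set `S`. -/
def entropyBitsOn {α : Type*} [MeasurableSpace α] (μ : Measure α) (S : Finset α) : ℝ :=
  - ∑ a ∈ S, (μ {a}).toReal * Real.logb 2 (μ {a}).toReal

lemma logb_ge_neg_inv {t : ℝ} (ht : 0 < t) : -(1/t) ≤ Real.logb 2 t := by
  have hlog2 : (0.6931471803 : ℝ) < Real.log 2 := Real.log_two_gt_d9
  set u := Real.sqrt t with hu
  have hu0 : 0 < u := Real.sqrt_pos.mpr ht
  have hut : u ^ 2 = t := Real.sq_sqrt ht.le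
  have hlu : 1 - u⁻¹ ≤ Real.log u := by
    have := Real.log_le_sub_one_of_pos (inv_pos.mpr hu0)
    rw [Real.log_inv] at this
    linarith
  have hlt : Real.log t = 2 * Real.log u := by
    rw [← hut, Real.log_pow]; push_cast; ring
  have key : -Real.log 2 ≤ t * Real.log t := by
    have h1 : t * Real.log t = 2 * u^2 * Real.log u := by rw [hlt, ← hut]; ring
    have h2 : 2 * u^2 * (1 - u⁻¹) ≤ 2 * u^2 * Real.log u :=
      mul_le_mul_of_nonneg_left hlu (by positivity)
    have h3 : 2 * u^2 * (1 - u⁻¹) = 2 * u^2 - 2 * u := by field_simp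
    nlinarith [sq_nonneg (2*u - 1)]
  have hlog2pos : 0 < Real.log 2 := by linarith
  rw [Real.logb, le_div_iff₀ hlog2pos]
  have h1t : (1/t) * t = 1 := by field_simp
  nlinarith [key]

/-- **Conditional entropy of a uniform variable given a likely event** (`claim:uniform1`).
`x` uniform on a finite set `S`, `E` a binary random variable with `Pr[E = 1] ≥ 1 - δ`.
Then `H(x | E = 1) ≥ log|S| - 1/(1-δ)` (entropy in bits). -/
theorem entropy_conditioned_on_event (α : Type*) [MeasurableSpace α]
    [MeasurableSingletonClass α]
    (S : Finset α) (hS : S.Nonempty) (δ : ℝ) (hδ0 : 0 ≤ δ) (hδ1 : δ < 1)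
    (ν : Measure (α × Bool)) (hν : IsProbabilityMeasure ν)
    (hmarg : ν.map Prod.fst = (S.card : ℝ≥0∞)⁻¹ • ∑ a ∈ S, Measure.dirac a)
    (hE : ENNReal.ofReal (1 - δ) ≤ ν {q | q.2 = true}) :
    Real.logb 2 S.card - 1 / (1 - δ) ≤
      entropyBitsOn ((ν[|{q | q.2 = true}]).map Prod.fst) S := by
  classical
  have ht : (0:ℝ) < 1 - δ := by linarith
  set E : Set (α × Bool) := {q | q.2 = true} with hEdef
  have hEm : MeasurableSet E := measurable_snd (measurableSet_singleton true)
  set p := ν E with hpdef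
  have hp0 : p ≠ 0 := by
    intro h
    rw [h, le_zero_iff, ENNReal.ofReal_eq_zero] at hE
    linarith
  have hp1 : p ≤ 1 := prob_le_one
  have hptop : p ≠ ⊤ := (hp1.trans_lt one_lt_top).ne
  set μ := (ν[|E]).map Prod.fst with hμdef
  have hcond : IsProbabilityMeasure (ν[|E]) := cond_isProbabilityMeasure hp0
  have hμprob : IsProbabilityMeasure μ := Measure.isProbabilityMeasure_map measurable_fst.aemeasurable
  -- value of μ on singletons
  have hμa : ∀ a : α, μ {a} = p⁻¹ * ν (E ∩ Prod.fst ⁻¹' {a}) := by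
    intro a
    rw [hμdef, Measure.map_apply measurable_fst (measurableSet_singleton a),
      cond_apply hEm]
  -- marginal values
  have hmarga : ∀ a : α, ν (Prod.fst ⁻¹' {a}) = if a ∈ S then (S.card : ℝ≥0∞)⁻¹ else 0 := by
    intro a
    have h1 : ν.map Prod.fst {a} = ν (Prod.fst ⁻¹' {a}) :=
      Measure.map_apply measurable_fst (measurableSet_singleton a)
    rw [← h1, hmarg]
    simp only [Measure.smul_apply, Measure.finset_sum_apply, smul_eq_mul]
    rw [Finset.sum_congr rfl (fun b _ => Measure.dirac_apply b {a})]
    by_cases haS : a ∈ S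
    · rw [if_pos haS]
      rw [Finset.sum_eq_single a]
      · simp
      · intro b _ hba
        simp [Set.indicator, Set.mem_singleton_iff, hba]
      · intro h; exact absurd haS h
    · rw [if_neg haS]
      rw [Finset.sum_eq_zero]
      · simp
      · intro b hb
        have : b ≠ a := fun h => haS (h ▸ hb)
        simp [Set.indicator, Set.mem_singleton_iff, this]
  -- upper bound on singletons
  have hbound : ∀ a ∈ S, μ {a} ≤ (ENNReal.ofReal (1 - δ))⁻¹ * (S.card : ℝ≥0∞)⁻¹ := by
    intro a ha
    rw [hμa a]
    apply mul_le_mul'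
    · exact ENNReal.inv_le_inv' hE
    · calc ν (E ∩ Prod.fst ⁻¹' {a}) ≤ ν (Prod.fst ⁻¹' {a}) :=
            measure_mono Set.inter_subset_right
        _ = (S.card : ℝ≥0∞)⁻¹ := by rw [hmarga a, if_pos ha]
  -- sum of singletons is 1
  have hSm : MeasurableSet (↑S : Set α) := S.measurableSet
  have hcompl : μ (↑S : Set α)ᶜ = 0 := by
    rw [hμdef, Measure.map_apply measurable_fst hSm.compl, cond_apply hEm]
    have h2 : ν (Prod.fst ⁻¹' (↑S : Set α)ᶜ) = 0 := by
      have : ν.map Prod.fst (↑S : Set α)ᶜ = ν (Prod.fst ⁻¹' (↑S : Set α)ᶜ) :=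
        Measure.map_apply measurable_fst hSm.compl
      rw [← this, hmarg]
      simp only [Measure.smul_apply, Measure.finset_sum_apply, smul_eq_mul]
      rw [Finset.sum_eq_zero]
      · simp
      · intro b hb
        rw [Measure.dirac_apply]
        simp [Set.indicator, hb]
    have : ν (E ∩ Prod.fst ⁻¹' (↑S : Set α)ᶜ) = 0 :=
      measure_mono_null Set.inter_subset_right h2
    rw [this, mul_zero]
  have hμS : μ (↑S : Set α) = 1 := by
    have := measure_add_measure_compl (μ := μ) hSm
    rw [hcompl, add_zero] at this
    rw [this]; exact measure_univ
  have hsum : ∑ a ∈ S, μ {a} = 1 := by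
    have hdisj : (↑S : Set α).PairwiseDisjoint (fun a => ({a} : Set α)) := by
      intro x _ y _ hxy
      simp [Function.onFun, Set.disjoint_singleton, hxy]
    have := measure_biUnion_finset (μ := μ) hdisj (fun b _ => measurableSet_singleton b)
    rw [← hμS]
    rw [← this]
    congr 1
    ext x
    simp
  -- move to reals
  set q : α → ℝ := fun a => (μ {a}).toReal with hqdef
  have hμfin : ∀ a, μ {a} ≠ ⊤ := fun a => (measure_lt_top μ {a}).ne
  have hqsum : ∑ a ∈ S, q a = 1 := by
    have h := (ENNReal.toReal_sum (s := S) (f := fun a => μ {a}) (fun a _ => hμfin a))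
    rw [hsum, ENNReal.toReal_one] at h
    exact h.symm
  set c : ℝ := ((1 - δ) * S.card)⁻¹ with hcdef
  have hcard0 : (0:ℝ) < S.card := by exact_mod_cast hS.card_pos
  have hcpos : 0 < c := by rw [hcdef]; positivity
  have hqle : ∀ a ∈ S, q a ≤ c := by
    intro a ha
    have h1 := hbound a ha
    have h2 : ((ENNReal.ofReal (1 - δ))⁻¹ * (S.card : ℝ≥0∞)⁻¹) ≠ ⊤ := by
      apply ENNReal.mul_ne_top
      · simp [ENNReal.inv_ne_top, ENNReal.ofReal_eq_zero]; linarith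
      · simp [ENNReal.inv_ne_top, hS.ne_empty]
    have h3 := ENNReal.toReal_mono h2 h1
    rw [hqdef]
    simp only
    refine h3.trans_eq ?_
    rw [ENNReal.toReal_mul, ENNReal.toReal_inv, ENNReal.toReal_inv,
      ENNReal.toReal_ofReal ht.le, hcdef, mul_inv]
    simp
  have hqnn : ∀ a, 0 ≤ q a := fun a => ENNReal.toReal_nonneg
  -- entropy bound
  have hterm : ∀ a ∈ S, q a * Real.logb 2 (q a) ≤ q a * Real.logb 2 c := by
    intro a ha
    rcases eq_or_lt_of_le (hqnn a) with h0 | h0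
    · rw [← h0]; simp
    · exact mul_le_mul_of_nonneg_left
        (Real.logb_le_logb_of_le one_lt_two h0 (hqle a ha)) (hqnn a)
  have hent : Real.logb 2 ((1 - δ) * S.card) ≤ entropyBitsOn μ S := by
    rw [entropyBitsOn, le_neg]
    calc ∑ a ∈ S, q a * Real.logb 2 (q a)
        ≤ ∑ a ∈ S, q a * Real.logb 2 c := Finset.sum_le_sum hterm
      _ = Real.logb 2 c := by rw [← Finset.sum_mul, hqsum, one_mul]
      _ = -Real.logb 2 ((1 - δ) * S.card) := by
          rw [hcdef, Real.logb_inv]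
  have hsplit : Real.logb 2 ((1 - δ) * S.card) =
      Real.logb 2 (1 - δ) + Real.logb 2 S.card :=
    Real.logb_mul (by linarith) (by positivity)
  have hfin := logb_ge_neg_inv ht
  rw [hsplit] at hent
  linarith

end
end
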